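/- arXiv:2407.12652 — 12 statements merged into one kernel-verified Lean document; each statement's English description precedes it below -/
import Mathlib

section
/- Let n, m be positive integers, let U be an n×n complex unitary matrix, and let J be an m×n complex matrix with J J* = I_m; set Π := J* J, an orthogonal projection of rank m on ℂⁿ. Then the following are equivalent: (i) U Π = Π U; (ii) the m×m matrix W := J U J* is unitary and W J = J U; (iii) there exists an m×m unitary matrix W′ such that U* (J* A J) U = J* (W′* A W′) J for every m×m complex matrix A. -/
open Matrix

/-- for a unitary `U` on `ℂⁿ` and a coisometry `J : ℂⁿ → ℂᵐ` (so `Π = J*J` is a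
rank-`m` projection), the following are equivalent: (i) `U` commutes with `Π`;
(ii) `W = J U J*` is unitary and `W J = J U`; (iii) there is a unitary `W'` on `ℂᵐ` with
`U* (J* A J) U = J* (W'* A W') J` for every `m × m` matrix `A`. -/
theorem statement1 (n m : ℕ) (hn : 0 < n) (hm : 0 < m)
    (U : Matrix (Fin n) (Fin n) ℂ) (hU : U ∈ Matrix.unitaryGroup (Fin n) ℂ)
    (J : Matrix (Fin m) (Fin n) ℂ) (hJ : J * Jᴴ = 1) :
    (U * (Jᴴ * J) = (Jᴴ * J) * U ↔
      (J * U * Jᴴ ∈ Matrix.unitaryGroup (Fin m) ℂ ∧ (J * U * Jᴴ) * J = J * U)) ∧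
    ((J * U * Jᴴ ∈ Matrix.unitaryGroup (Fin m) ℂ ∧ (J * U * Jᴴ) * J = J * U) ↔
      (∃ W' ∈ Matrix.unitaryGroup (Fin m) ℂ,
        ∀ A : Matrix (Fin m) (Fin m) ℂ, Uᴴ * (Jᴴ * A * J) * U = Jᴴ * (W'ᴴ * A * W') * J)) := by
  have hU1 : U * Uᴴ = 1 := mem_unitaryGroup_iff.mp hU
  have hU2 : Uᴴ * U = 1 := mem_unitaryGroup_iff'.mp hU
  -- (i) → (ii)
  have fwd : U * (Jᴴ * J) = (Jᴴ * J) * U →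
      (J * U * Jᴴ ∈ Matrix.unitaryGroup (Fin m) ℂ ∧ (J * U * Jᴴ) * J = J * U) := by
    intro h
    have hWJ : (J * U * Jᴴ) * J = J * U := by
      calc (J * U * Jᴴ) * J = J * (U * (Jᴴ * J)) := by
            simp only [Matrix.mul_assoc]
        _ = J * ((Jᴴ * J) * U) := by rw [h]
        _ = (J * Jᴴ) * (J * U) := by simp only [Matrix.mul_assoc]
        _ = J * U := by rw [hJ, Matrix.one_mul]
    refine ⟨mem_unitaryGroup_iff.mpr ?_, hWJ⟩
    have : (J * U * Jᴴ) * (J * U * Jᴴ)ᴴ = ((J * U * Jᴴ) * J) * (Uᴴ * Jᴴ) := by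
      simp only [conjTranspose_mul, conjTranspose_conjTranspose, Matrix.mul_assoc]
    rw [Matrix.star_eq_conjTranspose, this, hWJ]
    calc (J * U) * (Uᴴ * Jᴴ) = J * ((U * Uᴴ) * Jᴴ) := by simp only [Matrix.mul_assoc]
      _ = 1 := by rw [hU1, Matrix.one_mul, hJ]
  -- (ii) → (i)
  have bwd : (J * U * Jᴴ ∈ Matrix.unitaryGroup (Fin m) ℂ ∧ (J * U * Jᴴ) * J = J * U) →
      U * (Jᴴ * J) = (Jᴴ * J) * U := by
    rintro ⟨hWmem, hWJ⟩
    have hW2 : (J * U * Jᴴ)ᴴ * (J * U * Jᴴ) = 1 := mem_unitaryGroup_iff'.mp hWmem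
    have hJW : Uᴴ * Jᴴ = Jᴴ * (J * U * Jᴴ)ᴴ := by
      have := congrArg conjTranspose hWJ
      simpa only [conjTranspose_mul, Matrix.mul_assoc] using this.symm
    have step : (Uᴴ * Jᴴ) * (J * U * Jᴴ) = Jᴴ := by
      rw [hJW, Matrix.mul_assoc, hW2, Matrix.mul_one]
    have hUJ : U * Jᴴ = Jᴴ * (J * U * Jᴴ) := by
      calc U * Jᴴ = U * ((Uᴴ * Jᴴ) * (J * U * Jᴴ)) := by rw [step]
        _ = (U * Uᴴ) * (Jᴴ * (J * U * Jᴴ)) := by simp only [Matrix.mul_assoc]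
        _ = Jᴴ * (J * U * Jᴴ) := by rw [hU1, Matrix.one_mul]
    calc U * (Jᴴ * J) = (U * Jᴴ) * J := by simp only [Matrix.mul_assoc]
      _ = Jᴴ * ((J * U * Jᴴ) * J) := by rw [hUJ, Matrix.mul_assoc]
      _ = (Jᴴ * J) * U := by rw [hWJ, Matrix.mul_assoc]
  refine ⟨⟨fwd, bwd⟩, ?_, ?_⟩
  · -- (ii) → (iii)
    rintro ⟨hWmem, hWJ⟩
    refine ⟨J * U * Jᴴ, hWmem, fun A => ?_⟩
    have hW2 : (J * U * Jᴴ)ᴴ * (J * U * Jᴴ) = 1 := mem_unitaryGroup_iff'.mp hWmem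
    have hJW : Uᴴ * Jᴴ = Jᴴ * (J * U * Jᴴ)ᴴ := by
      have := congrArg conjTranspose hWJ
      simpa only [conjTranspose_mul, Matrix.mul_assoc] using this.symm
    calc Uᴴ * (Jᴴ * A * J) * U = (Uᴴ * Jᴴ) * (A * (J * U)) := by
          simp only [Matrix.mul_assoc]
      _ = (Jᴴ * (J * U * Jᴴ)ᴴ) * (A * ((J * U * Jᴴ) * J)) := by rw [hJW, hWJ]
      _ = Jᴴ * ((J * U * Jᴴ)ᴴ * A * (J * U * Jᴴ)) * J := by simp only [Matrix.mul_assoc]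
  · -- (iii) → (ii)
    rintro ⟨W', hW'mem, hW'⟩
    apply fwd
    have hW'2 : W'ᴴ * W' = 1 := mem_unitaryGroup_iff'.mp hW'mem
    have h1 := hW' 1
    simp only [Matrix.mul_one, hW'2] at h1
    -- h1 : Uᴴ * (Jᴴ * J) * U = Jᴴ * J
    have h2 := congrArg (fun X => U * X) h1
    simp only [Matrix.mul_assoc] at h2 ⊢
    rw [← h2, ← Matrix.mul_assoc, hU1, Matrix.one_mul]
end

section
/- Let H_A, H_B, H_C be nonzero finite-dimensional complex Hilbert spaces. Let W be a unitary operator on H_A ⊗ H_B ⊗ H_C and U a unitary operator on H_A ⊗ H_B such that W* (X ⊗ 1_B ⊗ 1_C) W = (U* (X ⊗ 1_B) U) ⊗ 1_C for every linear operator X on H_A. Then there exists a unitary operator V on H_B ⊗ H_C such that W = (1_A ⊗ V)(U ⊗ 1_C). -/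
open Kronecker Matrix

lemma kron_conjT {m n p q : Type*} (M : Matrix m n ℂ) (N : Matrix p q ℂ) :
    (M ⊗ₖ N)ᴴ = Mᴴ ⊗ₖ Nᴴ := by
  ext ⟨i, j⟩ ⟨k, l⟩
  simp [Matrix.conjTranspose_apply, mul_comm]

lemma reindex_mul {m n p : Type*} [Fintype n] [Fintype m] [Fintype p]
    {m' n' p' : Type*} [Fintype n'] (e₁ : m ≃ m') (e₂ : n ≃ n') (e₃ : p ≃ p')
    (M : Matrix m n ℂ) (N : Matrix n p ℂ) :
    Matrix.reindex e₁ e₃ (M * N) =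
      Matrix.reindex e₁ e₂ M * Matrix.reindex e₂ e₃ N := by
  simp [Matrix.reindex_apply, Matrix.submatrix_mul_equiv]

lemma reindex_conjT {m n m' n' : Type*} (e₁ : m ≃ m') (e₂ : n ≃ n')
    (M : Matrix m n ℂ) :
    (Matrix.reindex e₁ e₂ M)ᴴ = Matrix.reindex e₂ e₁ Mᴴ := by
  ext i j
  simp [Matrix.conjTranspose_apply]

/-- A matrix commuting with all `X ⊗ₖ 1` has equal diagonal blocks and zero
off-diagonal blocks. -/
lemma commutant_key {A D : Type*} [Fintype A] [Fintype D] [DecidableEq A] [DecidableEq D]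
    (T : Matrix (A × D) (A × D) ℂ)
    (hT : ∀ X : Matrix A A ℂ,
      (X ⊗ₖ (1 : Matrix D D ℂ)) * T = T * (X ⊗ₖ (1 : Matrix D D ℂ)))
    (i j a a' : A) (b b' : D) :
    (if a = i then T (j, b) (a', b') else 0) =
      (if j = a' then T (a, b) (i, b') else 0) := by
  have := congrFun (congrFun (hT (Matrix.single i j 1)) (a, b)) (a', b')
  simpa [Matrix.mul_apply, Fintype.sum_prod_type, Matrix.single,
    Matrix.one_apply, ite_and, eq_comm] using this

/-- if a unitary `W` on `H_A ⊗ H_B ⊗ H_C` implements on the first factor the same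
homomorphism as a unitary `U` on `H_A ⊗ H_B` (tensored with the identity on `H_C`), then
`W = (1_A ⊗ V)(U ⊗ 1_C)` for some unitary `V` on `H_B ⊗ H_C`. -/
theorem statement2 {A B C : Type*} [Fintype A] [Fintype B] [Fintype C]
    [DecidableEq A] [DecidableEq B] [DecidableEq C]
    [Nonempty A] [Nonempty B] [Nonempty C]
    (W : Matrix (A × B × C) (A × B × C) ℂ) (hW : W ∈ Matrix.unitaryGroup (A × B × C) ℂ)
    (U : Matrix (A × B) (A × B) ℂ) (hU : U ∈ Matrix.unitaryGroup (A × B) ℂ)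
    (h : ∀ X : Matrix A A ℂ,
      Wᴴ * (X ⊗ₖ (1 : Matrix (B × C) (B × C) ℂ)) * W =
        Matrix.reindex (Equiv.prodAssoc A B C) (Equiv.prodAssoc A B C)
          ((Uᴴ * (X ⊗ₖ (1 : Matrix B B ℂ)) * U) ⊗ₖ (1 : Matrix C C ℂ))) :
    ∃ V ∈ Matrix.unitaryGroup (B × C) ℂ,
      W = ((1 : Matrix A A ℂ) ⊗ₖ V) *
        Matrix.reindex (Equiv.prodAssoc A B C) (Equiv.prodAssoc A B C)
          (U ⊗ₖ (1 : Matrix C C ℂ)) := by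
  set e := Equiv.prodAssoc A B C
  set R : Matrix (A × B × C) (A × B × C) ℂ :=
    Matrix.reindex e e (U ⊗ₖ (1 : Matrix C C ℂ)) with hR
  have hUU : Uᴴ * U = 1 := by
    have := (Matrix.mem_unitaryGroup_iff').mp hU
    simpa [Matrix.star_eq_conjTranspose] using this
  have hUU' : U * Uᴴ = 1 := by
    have := (Matrix.mem_unitaryGroup_iff).mp hU
    simpa [Matrix.star_eq_conjTranspose] using this
  have hWW' : W * Wᴴ = 1 := by
    have := (Matrix.mem_unitaryGroup_iff).mp hW
    simpa [Matrix.star_eq_conjTranspose] using this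
  have hWW : Wᴴ * W = 1 := by
    have := (Matrix.mem_unitaryGroup_iff').mp hW
    simpa [Matrix.star_eq_conjTranspose] using this
  have hRH : Rᴴ = Matrix.reindex e e (Uᴴ ⊗ₖ (1 : Matrix C C ℂ)) := by
    rw [hR, reindex_conjT, kron_conjT, Matrix.conjTranspose_one]
  have hRR' : R * Rᴴ = 1 := by
    rw [hR, hRH, ← reindex_mul e e e, ← Matrix.mul_kronecker_mul, hUU', Matrix.one_mul,
      Matrix.one_kronecker_one]
    simp
  have hRR : Rᴴ * R = 1 := by
    rw [hR, hRH, ← reindex_mul e e e, ← Matrix.mul_kronecker_mul, hUU, Matrix.one_mul,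
      Matrix.one_kronecker_one]
    simp
  -- rewrite the RHS of `h` as `Rᴴ * (X ⊗ₖ 1) * R`
  have h' : ∀ X : Matrix A A ℂ,
      Wᴴ * (X ⊗ₖ (1 : Matrix (B × C) (B × C) ℂ)) * W =
        Rᴴ * (X ⊗ₖ (1 : Matrix (B × C) (B × C) ℂ)) * R := by
    intro X
    rw [h X]
    have hmid : Matrix.reindex e e ((X ⊗ₖ (1 : Matrix B B ℂ)) ⊗ₖ (1 : Matrix C C ℂ)) =
        X ⊗ₖ (1 : Matrix (B × C) (B × C) ℂ) := by
      rw [Matrix.kronecker_assoc, Matrix.one_kronecker_one]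
    rw [hR, hRH, ← hmid, ← reindex_mul e e e, ← reindex_mul e e e,
      ← Matrix.mul_kronecker_mul, ← Matrix.mul_kronecker_mul, Matrix.one_mul, Matrix.one_mul]
  set T : Matrix (A × B × C) (A × B × C) ℂ := W * Rᴴ with hT
  have hcomm : ∀ X : Matrix A A ℂ,
      (X ⊗ₖ (1 : Matrix (B × C) (B × C) ℂ)) * T = T * (X ⊗ₖ (1 : Matrix (B × C) (B × C) ℂ)) := by
    intro X
    have := h' X
    calc (X ⊗ₖ (1 : Matrix (B × C) (B × C) ℂ)) * T
        = W * (Wᴴ * (X ⊗ₖ (1 : Matrix (B × C) (B × C) ℂ)) * W) * Rᴴ := by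
          rw [hT]; rw [show W * (Wᴴ * (X ⊗ₖ (1 : Matrix (B × C) (B × C) ℂ)) * W) * Rᴴ =
            (W * Wᴴ) * (X ⊗ₖ (1 : Matrix (B × C) (B × C) ℂ)) * (W * Rᴴ) by
              simp only [mul_assoc], hWW', Matrix.one_mul]
      _ = W * (Rᴴ * (X ⊗ₖ (1 : Matrix (B × C) (B × C) ℂ)) * R) * Rᴴ := by rw [this]
      _ = T * (X ⊗ₖ (1 : Matrix (B × C) (B × C) ℂ)) := by
          rw [hT, show W * (Rᴴ * (X ⊗ₖ (1 : Matrix (B × C) (B × C) ℂ)) * R) * Rᴴ =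
            (W * Rᴴ) * (X ⊗ₖ (1 : Matrix (B × C) (B × C) ℂ)) * (R * Rᴴ) by
              simp only [mul_assoc], hRR', Matrix.mul_one]
  obtain ⟨a0⟩ := ‹Nonempty A›
  set V : Matrix (B × C) (B × C) ℂ := Matrix.of fun d d' => T (a0, d) (a0, d') with hV
  have hTV : T = (1 : Matrix A A ℂ) ⊗ₖ V := by
    ext ⟨a, d⟩ ⟨a', d'⟩
    rw [Matrix.kroneckerMap_apply]
    by_cases hd : a = a'
    · subst hd
      have key := commutant_key T hcomm a a0 a a0 d d'
      simp only [if_pos rfl, if_true, eq_self_iff_true] at key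
      simp [hV, Matrix.one_apply, ← key]
    · have key := commutant_key T hcomm a a a a' d d'
      simp only [if_neg hd, if_pos rfl, if_true, eq_self_iff_true] at key
      simp [Matrix.one_apply, hd, key]
  have hTT : Tᴴ * T = 1 := by
    rw [hT, Matrix.conjTranspose_mul, Matrix.conjTranspose_conjTranspose,
      show R * Wᴴ * (W * Rᴴ) = R * (Wᴴ * W) * Rᴴ by simp only [mul_assoc], hWW,
      Matrix.mul_one, hRR']
  have hVV : Vᴴ * V = 1 := by
    have h1 : ((1 : Matrix A A ℂ) ⊗ₖ Vᴴ) * ((1 : Matrix A A ℂ) ⊗ₖ V) =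
        (1 : Matrix A A ℂ) ⊗ₖ (Vᴴ * V) := by
      rw [← Matrix.mul_kronecker_mul, Matrix.one_mul]
    have h3 : ((1 : Matrix A A ℂ) ⊗ₖ V)ᴴ = (1 : Matrix A A ℂ) ⊗ₖ Vᴴ := by
      rw [kron_conjT, Matrix.conjTranspose_one]
    have h2 : (1 : Matrix A A ℂ) ⊗ₖ (Vᴴ * V) = 1 := by
      rw [← h1, ← h3, ← hTV, hTT]
    ext d d'
    have := congrFun (congrFun h2 (a0, d)) (a0, d')
    simpa [Matrix.one_apply] using this
  refine ⟨V, ?_, ?_⟩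
  · rw [Matrix.mem_unitaryGroup_iff', Matrix.star_eq_conjTranspose, hVV]
  · have : W = T * R := by
      rw [hT, Matrix.mul_assoc, hRR, Matrix.mul_one]
    rw [this, hTV, hR]
end

section
/- Let H₀, H_M, H_W be nonzero finite-dimensional complex Hilbert spaces, let Π₀, Π_M, Π_W be nonzero orthogonal projections on H₀, H_M, H_W respectively, let U be a unitary operator on H₀ ⊗ H_M, and let V be a unitary operator on H_M ⊗ H_W. If (U (Π₀ ⊗ Π_M) U*) ⊗ Π_W = Π₀ ⊗ (V* (Π_M ⊗ Π_W) V) as operators on H₀ ⊗ H_M ⊗ H_W, then there exists a unitary operator Z on H_M such that V* (Π_M ⊗ Π_W) V = (Z* Π_M Z) ⊗ Π_W and U (Π₀ ⊗ Π_M) U* = Π₀ ⊗ (Z* Π_M Z). -/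
/-!
Fixing a nonzero entry of `Π_W` and comparing entries on both sides of the hypothesis cuts out a
matrix `Q` on `H_M` with `U (Π₀ ⊗ Π_M) U* = Π₀ ⊗ Q` and `V* (Π_M ⊗ Π_W) V = Q ⊗ Π_W`. The left
side of the second identity is a projection of trace `tr Π_M · tr Π_W`, and `tr Π_W ≠ 0`, so `Q` is
a projection with the same trace as `Π_M`. A Hermitian projection of trace `k` has characteristic
polynomial `(X - 1)^k X^(n - k)`, and Hermitian matrices with the same characteristic polynomial
are unitarily conjugate, which produces `Z`.
-/

open Kronecker Matrix

namespace Matrix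

variable {α : Type*} {l m n p : Type*}

theorem kronecker_right_cancel₀ [MulZeroClass α] [IsRightCancelMulZero α]
    {A A' : Matrix l m α} {B : Matrix n p α} (hB : B ≠ 0) (h : A ⊗ₖ B = A' ⊗ₖ B) : A = A' := by
  obtain ⟨j, j', hj⟩ : ∃ j j', B j j' ≠ 0 := by
    by_contra! hB'
    exact hB (ext hB')
  ext i i'
  exact mul_right_cancel₀ hj (congr_fun₂ h (i, j) (i', j'))

theorem kronecker_left_cancel₀ [MulZeroClass α] [IsLeftCancelMulZero α]
    {A : Matrix l m α} {B B' : Matrix n p α} (hA : A ≠ 0) (h : A ⊗ₖ B = A ⊗ₖ B') : B = B' := by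
  obtain ⟨i, i', hi⟩ : ∃ i i', A i i' ≠ 0 := by
    by_contra! hA'
    exact hA (ext hA')
  ext j j'
  exact mul_left_cancel₀ hi (congr_fun₂ h (i, j) (i', j'))

theorem exists_kronecker_eq_of_reindex_kronecker_eq {K l' m' n' : Type*} [Field K]
    {A : Matrix (l × m) (l' × m') K} {R : Matrix n n' K} {P : Matrix l l' K}
    {B : Matrix (m × n) (m' × n') K} (hP : P ≠ 0) (hR : R ≠ 0)
    (h : reindex (Equiv.prodAssoc l m n) (Equiv.prodAssoc l' m' n') (A ⊗ₖ R) = P ⊗ₖ B) :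
    ∃ Q : Matrix m m' K, A = P ⊗ₖ Q ∧ B = Q ⊗ₖ R := by
  obtain ⟨w, w', hw⟩ : ∃ w w', R w w' ≠ 0 := by
    by_contra! hR'
    exact hR (ext hR')
  have hA : A = P ⊗ₖ of fun j j' => (R w w')⁻¹ * B (j, w) (j', w') := by
    ext ⟨i, j⟩ ⟨i', j'⟩
    have hij := congr_fun₂ h (i, j, w) (i', j', w')
    simp only [reindex_apply, submatrix_apply, Equiv.prodAssoc_symm_apply,
      kroneckerMap_apply] at hij
    rw [kroneckerMap_apply, of_apply, mul_left_comm, ← hij, eq_inv_mul_iff_mul_eq₀ hw, mul_comm]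
  refine ⟨_, hA, kronecker_left_cancel₀ hP ?_⟩
  rw [← h, hA, kronecker_assoc]

theorem IsHermitian.exists_unitary_conj_eq_of_charpoly_eq {𝕜 : Type*} [RCLike 𝕜] [Fintype n]
    [DecidableEq n] {A B : Matrix n n 𝕜} (hA : A.IsHermitian) (hB : B.IsHermitian)
    (h : A.charpoly = B.charpoly) : ∃ Z ∈ unitaryGroup n 𝕜, Zᴴ * A * Z = B := by
  have hA' := hA.spectral_theorem
  have hB' := hB.spectral_theorem
  rw [(hA.eigenvalues_eq_eigenvalues_iff hB).2 h] at hA'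
  generalize (diagonal (RCLike.ofReal ∘ hB.eigenvalues) : Matrix n n 𝕜) = D at hA' hB'
  generalize hA.eigenvectorUnitary = UA at hA'
  generalize hB.eigenvectorUnitary = UB at hB'
  refine ⟨UA * star UB, (UA * star UB).2, ?_⟩
  rw [hA', hB']
  simp [← star_eq_conjTranspose, mul_assoc, ← mul_assoc (star (UA : Matrix n n 𝕜))]

end Matrix

namespace IsStarProjection

variable {m n : Type*} [Fintype m] [Fintype n]

theorem star_mul_mul_of_mem_unitary {R : Type*} [Ring R] [StarRing R] {p u : R}
    (hp : IsStarProjection p) (hu : u ∈ unitary R) : IsStarProjection (star u * p * u) := by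
  simpa using hp.map (Unitary.conjStarAlgAut ℤ R (star ⟨u, hu⟩))

theorem kronecker {α : Type*} [CommSemiring α] [StarRing α] {A : Matrix m m α} {B : Matrix n n α}
    (hA : IsStarProjection A) (hB : IsStarProjection B) : IsStarProjection (A ⊗ₖ B) where
  isIdempotentElem := by
    rw [IsIdempotentElem, ← mul_kronecker_mul, hA.isIdempotentElem.eq, hB.isIdempotentElem.eq]
  isSelfAdjoint := by
    rw [IsSelfAdjoint, star_eq_conjTranspose, conjTranspose_kronecker, ← star_eq_conjTranspose,
      ← star_eq_conjTranspose, hA.isSelfAdjoint.star_eq, hB.isSelfAdjoint.star_eq]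

theorem of_kronecker {R : Type*} [CommRing R] [IsDomain R] [StarRing R] {A : Matrix m m R}
    {B : Matrix n n R} (hAB : IsStarProjection (A ⊗ₖ B)) (hB : IsStarProjection B) (hB0 : B ≠ 0) :
    IsStarProjection A where
  isIdempotentElem := by
    refine kronecker_right_cancel₀ hB0 ?_
    nth_rw 1 [← hB.isIdempotentElem.eq]
    rw [mul_kronecker_mul, hAB.isIdempotentElem.eq]
  isSelfAdjoint := by
    refine kronecker_right_cancel₀ hB0 ?_
    have hstar := hAB.isSelfAdjoint.star_eq
    rwa [star_eq_conjTranspose, conjTranspose_kronecker, ← star_eq_conjTranspose B,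
      hB.isSelfAdjoint.star_eq] at hstar

variable {𝕜 : Type*} [RCLike 𝕜]

open scoped ComplexOrder in
theorem trace_ne_zero {P : Matrix n n 𝕜} (hP : IsStarProjection P) (hP0 : P ≠ 0) :
    P.trace ≠ 0 := by
  rw [← hP.isIdempotentElem.eq]
  nth_rw 1 [← hP.isSelfAdjoint.star_eq]
  rwa [star_eq_conjTranspose, Ne, trace_conjTranspose_mul_self_eq_zero_iff]

variable [DecidableEq n]

open Polynomial in
theorem exists_trace_eq_and_charpoly_eq {P : Matrix n n 𝕜} (hP : IsStarProjection P) :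
    ∃ k : ℕ, P.trace = k ∧ P.charpoly = (X - 1) ^ k * X ^ (Fintype.card n - k) := by
  have hH : P.IsHermitian := hP.isSelfAdjoint
  have h01 (i : n) : hH.eigenvalues i = 0 ∨ hH.eigenvalues i = 1 := by
    simpa using IsIdempotentElem.spectrum_subset ℝ hP.isIdempotentElem
      (hH.eigenvalues_mem_spectrum_real i)
  set S := Finset.univ.filter fun i => hH.eigenvalues i = 1
  have hcoe (i : n) : (hH.eigenvalues i : 𝕜) = if i ∈ S then 1 else 0 := by
    rcases h01 i with hi | hi <;> simp [S, hi]
  refine ⟨S.card, by simp [hH.trace_eq_sum_eigenvalues, hcoe], ?_⟩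
  rw [hH.charpoly_eq]
  simp only [hcoe, apply_ite, map_one, map_zero, sub_zero]
  rw [Finset.prod_ite, Finset.prod_const, Finset.prod_const, ← Finset.card_compl]
  simp [Finset.compl_eq_univ_sdiff, Finset.filter_notMem_eq_sdiff]

theorem exists_unitary_conj_eq_of_trace_eq {P Q : Matrix n n 𝕜} (hP : IsStarProjection P)
    (hQ : IsStarProjection Q) (h : P.trace = Q.trace) :
    ∃ Z ∈ unitaryGroup n 𝕜, Zᴴ * P * Z = Q := by
  obtain ⟨k, hPk, hPchar⟩ := hP.exists_trace_eq_and_charpoly_eq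
  obtain ⟨k', hQk, hQchar⟩ := hQ.exists_trace_eq_and_charpoly_eq
  obtain rfl : k = k' := by exact_mod_cast hPk.symm.trans (h.trans hQk)
  exact IsHermitian.exists_unitary_conj_eq_of_charpoly_eq hP.isSelfAdjoint hQ.isSelfAdjoint
    (hPchar.trans hQchar.symm)

end IsStarProjection

theorem statement3_general {H0 HM HW : Type*} [Fintype H0] [Fintype HM] [Fintype HW]
    [DecidableEq HM] [DecidableEq HW]
    (P0 : Matrix H0 H0 ℂ) (hP0'' : P0 ≠ 0)
    (PM : Matrix HM HM ℂ) (hPM : PMᴴ = PM) (hPM' : PM * PM = PM)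
    (PW : Matrix HW HW ℂ) (hPW : PWᴴ = PW) (hPW' : PW * PW = PW) (hPW'' : PW ≠ 0)
    (U : Matrix (H0 × HM) (H0 × HM) ℂ)
    (V : Matrix (HM × HW) (HM × HW) ℂ) (hV : V ∈ Matrix.unitaryGroup (HM × HW) ℂ)
    (h : Matrix.reindex (Equiv.prodAssoc H0 HM HW) (Equiv.prodAssoc H0 HM HW)
          ((U * (P0 ⊗ₖ PM) * Uᴴ) ⊗ₖ PW) = P0 ⊗ₖ (Vᴴ * (PM ⊗ₖ PW) * V)) :
    ∃ Z ∈ Matrix.unitaryGroup HM ℂ,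
      Vᴴ * (PM ⊗ₖ PW) * V = (Zᴴ * PM * Z) ⊗ₖ PW ∧
      U * (P0 ⊗ₖ PM) * Uᴴ = P0 ⊗ₖ (Zᴴ * PM * Z) := by
  have hPM_proj : IsStarProjection PM := ⟨hPM', hPM⟩
  have hPW_proj : IsStarProjection PW := ⟨hPW', hPW⟩
  obtain ⟨Q, hA, hB⟩ := exists_kronecker_eq_of_reindex_kronecker_eq hP0'' hPW'' h
  have hQ : IsStarProjection Q := by
    refine IsStarProjection.of_kronecker ?_ hPW_proj hPW''
    rw [← hB]
    exact (hPM_proj.kronecker hPW_proj).star_mul_mul_of_mem_unitary hV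
  have htrace : PM.trace = Q.trace := by
    refine mul_right_cancel₀ (hPW_proj.trace_ne_zero hPW'') ?_
    rw [← trace_kronecker, ← trace_kronecker, ← hB, trace_mul_cycle, ← star_eq_conjTranspose,
      Unitary.mul_star_self_of_mem hV, one_mul]
  obtain ⟨Z, hZ, rfl⟩ := hPM_proj.exists_unitary_conj_eq_of_trace_eq hQ htrace
  exact ⟨Z, hZ, hB, hA⟩

/-- if `(U (Π₀ ⊗ Π_M) U*) ⊗ Π_W = Π₀ ⊗ (V* (Π_M ⊗ Π_W) V)` for nonzero
orthogonal projections `Π₀, Π_M, Π_W` and unitaries `U` on `H₀ ⊗ H_M`, `V` on `H_M ⊗ H_W`,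
then there is a unitary `Z` on `H_M` with `V* (Π_M ⊗ Π_W) V = (Z* Π_M Z) ⊗ Π_W` and
`U (Π₀ ⊗ Π_M) U* = Π₀ ⊗ (Z* Π_M Z)`. -/
theorem statement3 {H0 HM HW : Type*} [Fintype H0] [Fintype HM] [Fintype HW]
    [DecidableEq H0] [DecidableEq HM] [DecidableEq HW]
    [Nonempty H0] [Nonempty HM] [Nonempty HW]
    (P0 : Matrix H0 H0 ℂ) (hP0 : P0ᴴ = P0) (hP0' : P0 * P0 = P0) (hP0'' : P0 ≠ 0)
    (PM : Matrix HM HM ℂ) (hPM : PMᴴ = PM) (hPM' : PM * PM = PM) (hPM'' : PM ≠ 0)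
    (PW : Matrix HW HW ℂ) (hPW : PWᴴ = PW) (hPW' : PW * PW = PW) (hPW'' : PW ≠ 0)
    (U : Matrix (H0 × HM) (H0 × HM) ℂ) (hU : U ∈ Matrix.unitaryGroup (H0 × HM) ℂ)
    (V : Matrix (HM × HW) (HM × HW) ℂ) (hV : V ∈ Matrix.unitaryGroup (HM × HW) ℂ)
    (h : Matrix.reindex (Equiv.prodAssoc H0 HM HW) (Equiv.prodAssoc H0 HM HW)
          ((U * (P0 ⊗ₖ PM) * Uᴴ) ⊗ₖ PW) = P0 ⊗ₖ (Vᴴ * (PM ⊗ₖ PW) * V)) :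
    ∃ Z ∈ Matrix.unitaryGroup HM ℂ,
      Vᴴ * (PM ⊗ₖ PW) * V = (Zᴴ * PM * Z) ⊗ₖ PW ∧
      U * (P0 ⊗ₖ PM) * Uᴴ = P0 ⊗ₖ (Zᴴ * PM * Z) :=
  statement3_general P0 hP0'' PM hPM hPM' PW hPW hPW' hPW'' U V hV h
end

section
/- Let H be a finite-dimensional complex Hilbert space and let G be a unitary on H ⊗ H commuting with the swap operator S. Let {λ_μ}_{μ=1..r}, {ρ_μ}_{μ=1..r}, {λ̃_μ}_{μ=1..r}, {ρ̃_μ}_{μ=1..r} be families of operators on H, set P := Σ_μ λ_μ ⊗ ρ_μ, and assume G P G* = Σ_μ λ̃_μ ⊗ ρ̃_μ and G* (ρ_μ ⊗ λ_ν) G = ρ̃_μ ⊗ λ̃_ν for all μ, ν ∈ {1,…,r}. Then (i) λ_μ ⊗ ρ_ν = G (λ̃_μ ⊗ ρ̃_ν) G* for all μ, ν, and (ii) G² P (G*)² = P. -/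
open Kronecker Matrix

/-- The swap operator on `H ⊗ H`, determined by `S(x ⊗ y) = y ⊗ x`. -/
def swapM (n : Type*) [DecidableEq n] : Matrix (n × n) (n × n) ℂ :=
  fun p q => if p.1 = q.2 ∧ p.2 = q.1 then 1 else 0

/-!
Conjugating by the swap exchanges the tensor factors, and a unitary commuting with the swap
has an adjoint commuting with it as well. Hence `G* (λ_μ ⊗ ρ_ν) G` is the swap-conjugate of
`G* (ρ_ν ⊗ λ_μ) G = ρ̃_ν ⊗ λ̃_μ`, i.e. equals `λ̃_μ ⊗ ρ̃_ν`; undoing the conjugation gives (i).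
For (ii), `G² P (G*)² = G (Σ_μ λ̃_μ ⊗ ρ̃_μ) G* = Σ_μ λ_μ ⊗ ρ_μ` by the diagonal case of (i).
-/

theorem mul_star_mul_mul_mul_star_of_mem_unitary {R : Type*} [Monoid R] [StarMul R] {U : R}
    (hU : U ∈ unitary R) (X : R) : U * (star U * X * U) * star U = X := by
  have hUU : U * star U = 1 := Unitary.mul_star_self_of_mem hU
  calc U * (star U * X * U) * star U = U * star U * X * (U * star U) := by
        simp only [mul_assoc]
    _ = X := by rw [hUU, one_mul, mul_one]

namespace swapM

variable {n : Type*} [DecidableEq n]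

theorem eq_one_submatrix_id_prodComm :
    swapM n = (1 : Matrix (n × n) (n × n) ℂ).submatrix id (Equiv.prodComm n n) := by
  ext p q
  simp [swapM, one_apply, Prod.ext_iff, eq_comm]

theorem eq_one_submatrix_prodComm_id :
    swapM n = (1 : Matrix (n × n) (n × n) ℂ).submatrix (Equiv.prodComm n n) id := by
  ext p q
  simp [swapM, one_apply, Prod.ext_iff, eq_comm, and_comm]

theorem conjTranspose_swapM : (swapM n)ᴴ = swapM n := by
  ext p q
  simp [swapM, eq_comm, and_comm]

variable [Fintype n]

theorem swapM_mul (M : Matrix (n × n) (n × n) ℂ) : swapM n * M = M.submatrix Prod.swap id := by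
  rw [eq_one_submatrix_id_prodComm, one_submatrix_mul]
  rfl

theorem mul_swapM (M : Matrix (n × n) (n × n) ℂ) : M * swapM n = M.submatrix id Prod.swap := by
  rw [eq_one_submatrix_prodComm_id, mul_submatrix_one]
  rfl

theorem swapM_mul_kronecker_mul_swapM (A B : Matrix n n ℂ) :
    swapM n * (A ⊗ₖ B) * swapM n = B ⊗ₖ A := by
  rw [swapM_mul, mul_swapM, submatrix_submatrix]
  ext p q
  simp [mul_comm]

theorem conjTranspose_mul_kronecker_mul_of_commute {G : Matrix (n × n) (n × n) ℂ}
    (hGS : Commute G (swapM n)) (A B : Matrix n n ℂ) :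
    Gᴴ * (A ⊗ₖ B) * G = swapM n * (Gᴴ * (B ⊗ₖ A) * G) * swapM n := by
  have hGHS : Commute Gᴴ (swapM n) := by
    simpa only [star_eq_conjTranspose, conjTranspose_swapM] using hGS.star_star
  calc Gᴴ * (A ⊗ₖ B) * G = Gᴴ * (swapM n * (B ⊗ₖ A) * swapM n) * G := by
        rw [swapM_mul_kronecker_mul_swapM]
    _ = (Gᴴ * swapM n) * (B ⊗ₖ A) * (swapM n * G) := by simp only [mul_assoc]
    _ = (swapM n * Gᴴ) * (B ⊗ₖ A) * (G * swapM n) := by rw [hGHS.eq, hGS.eq]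
    _ = swapM n * (Gᴴ * (B ⊗ₖ A) * G) * swapM n := by simp only [mul_assoc]

end swapM

open swapM in
/-- if a unitary `G` on `H ⊗ H` commutes with the swap, `P = Σ_μ λ_μ ⊗ ρ_μ`,
`G P G* = Σ_μ λ̃_μ ⊗ ρ̃_μ` and `G* (ρ_μ ⊗ λ_ν) G = ρ̃_μ ⊗ λ̃_ν` for all `μ, ν`, then
(i) `λ_μ ⊗ ρ_ν = G (λ̃_μ ⊗ ρ̃_ν) G*` for all `μ, ν` and (ii) `G² P (G*)² = P`. -/
theorem statement5 {n : Type*} [Fintype n] [DecidableEq n] (r : ℕ)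
    (G : Matrix (n × n) (n × n) ℂ) (hG : G ∈ Matrix.unitaryGroup (n × n) ℂ)
    (hGS : G * swapM n = swapM n * G)
    (lam rho lamt rhot : Fin r → Matrix n n ℂ)
    (P : Matrix (n × n) (n × n) ℂ) (hP : P = ∑ μ, lam μ ⊗ₖ rho μ)
    (h1 : G * P * Gᴴ = ∑ μ, lamt μ ⊗ₖ rhot μ)
    (h2 : ∀ μ ν, Gᴴ * (rho μ ⊗ₖ lam ν) * G = rhot μ ⊗ₖ lamt ν) :
    (∀ μ ν, lam μ ⊗ₖ rho ν = G * (lamt μ ⊗ₖ rhot ν) * Gᴴ) ∧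
    G ^ 2 * P * Gᴴ ^ 2 = P := by
  have hconj : ∀ μ ν, Gᴴ * (lam μ ⊗ₖ rho ν) * G = lamt μ ⊗ₖ rhot ν := fun μ ν => by
    rw [conjTranspose_mul_kronecker_mul_of_commute hGS, h2, swapM_mul_kronecker_mul_swapM]
  have hkron : ∀ μ ν, lam μ ⊗ₖ rho ν = G * (lamt μ ⊗ₖ rhot ν) * Gᴴ := fun μ ν => by
    rw [← hconj]; exact (mul_star_mul_mul_mul_star_of_mem_unitary hG _).symm
  refine ⟨hkron, ?_⟩
  calc G ^ 2 * P * Gᴴ ^ 2 = G * (G * P * Gᴴ) * Gᴴ := by simp only [pow_two, mul_assoc]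
    _ = ∑ μ, G * (lamt μ ⊗ₖ rhot μ) * Gᴴ := by rw [h1, Finset.mul_sum, Finset.sum_mul]
    _ = P := by simp only [← hkron, hP]
end

section
/- Let H be a finite-dimensional complex Hilbert space and G a unitary on H ⊗ H. Let {λ_μ}_{μ=1..r} and {ρ_μ}_{μ=1..r} be families of nonzero operators on H, each family pairwise orthogonal in the Hilbert–Schmidt inner product, such that P := Σ_μ λ_μ ⊗ ρ_μ satisfies P² = P. Let {λ̃_μ}_{μ=1..r} and {ρ̃_μ}_{μ=1..r} be families of operators on H such that for every integer n ≥ 1 and all indices μ₁,…,μₙ, ν₁,…,νₙ ∈ {1,…,r} one has G* (ρ_{μ₁}⋯ρ_{μₙ} ⊗ λ_{ν₁}⋯λ_{νₙ}) G = ρ̃_{μ₁}⋯ρ̃_{μₙ} ⊗ λ̃_{ν₁}⋯λ̃_{νₙ}. Then for every A in the (not necessarily unital) subalgebra of operators on H generated by {ρ_μ} and every B in the subalgebra generated by {λ_μ}, there exist Ã in the subalgebra generated by {ρ̃_μ} and B̃ in the subalgebra generated by {λ̃_μ} with G* (A ⊗ B) G = Ã ⊗ B̃. -/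
open Kronecker Matrix

namespace St6
variable {n : Type*} [Fintype n] [DecidableEq n]

omit [DecidableEq n] in
lemma trace_conjT_ne_zero {A : Matrix n n ℂ} (hA : A ≠ 0) : (Aᴴ * A).trace ≠ 0 := by
  intro h
  apply hA
  have h1 : (Aᴴ * A).trace = ((∑ i, ∑ k, Complex.normSq (A k i) : ℝ) : ℂ) := by
    simp only [Matrix.trace, Matrix.diag, Matrix.mul_apply, Matrix.conjTranspose_apply]
    push_cast
    refine Finset.sum_congr rfl fun i _ => Finset.sum_congr rfl fun k _ => ?_
    rw [Complex.normSq_eq_conj_mul_self]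
    rfl
  rw [h1, Complex.ofReal_eq_zero] at h
  have h2 : ∀ i ∈ Finset.univ, ∀ k ∈ Finset.univ, Complex.normSq (A k i) = 0 := by
    have := (Finset.sum_eq_zero_iff_of_nonneg (fun i _ =>
      Finset.sum_nonneg fun k _ => Complex.normSq_nonneg _)).mp h
    intro i hi k hk
    exact (Finset.sum_eq_zero_iff_of_nonneg (fun k _ => Complex.normSq_nonneg _)).mp
      (this i hi) k hk
  ext k i
  simpa using Complex.normSq_eq_zero.mp (h2 i (Finset.mem_univ i) k (Finset.mem_univ k))

omit [DecidableEq n] in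
lemma extract {r : ℕ} (u v : Fin r → Matrix n n ℂ) (hu0 : ∀ μ, u μ ≠ 0)
    (huorth : ∀ μ ν, μ ≠ ν → ((u μ)ᴴ * u ν).trace = 0)
    (hP2 : (∑ μ, u μ ⊗ₖ v μ) * (∑ μ, u μ ⊗ₖ v μ) = ∑ μ, u μ ⊗ₖ v μ) (τ : Fin r) :
    v τ ∈ Submodule.span ℂ (Set.range fun p : Fin r × Fin r => v p.1 * v p.2) := by
  classical
  set Φ : Matrix (n × n) (n × n) ℂ →ₗ[ℂ] Matrix n n ℂ :=
    { toFun := fun M => Matrix.of fun i j =>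
        ∑ a, ∑ b, (starRingEnd ℂ) (u τ a b) * M (a, i) (b, j)
      map_add' := by
        intro M N
        ext i j
        simp [Matrix.add_apply, mul_add, Finset.sum_add_distrib]
      map_smul' := by
        intro c M
        ext i j
        simp [Finset.mul_sum, mul_left_comm] } with hΦ
  have hΦkron : ∀ X Y : Matrix n n ℂ, Φ (X ⊗ₖ Y) = ((u τ)ᴴ * X).trace • Y := by
    intro X Y
    ext i j
    simp only [hΦ, LinearMap.coe_mk, AddHom.coe_mk, Matrix.of_apply, kroneckerMap_apply,
      Matrix.smul_apply, Matrix.trace, Matrix.diag, Matrix.mul_apply,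
      Matrix.conjTranspose_apply, smul_eq_mul, Finset.sum_mul]
    rw [Finset.sum_comm]
    refine Finset.sum_congr rfl fun a _ => Finset.sum_congr rfl fun b _ => ?_
    rw [starRingEnd_apply]
    ring
  have hexp : (∑ μ, u μ ⊗ₖ v μ) * (∑ μ, u μ ⊗ₖ v μ)
      = ∑ μ, ∑ ν, (u μ * u ν) ⊗ₖ (v μ * v ν) := by
    rw [Finset.sum_mul_sum]
    exact Finset.sum_congr rfl fun μ _ => Finset.sum_congr rfl fun ν _ =>
      (Matrix.mul_kronecker_mul _ _ _ _).symm
  have key : Φ (∑ μ, ∑ ν, (u μ * u ν) ⊗ₖ (v μ * v ν)) = Φ (∑ μ, u μ ⊗ₖ v μ) := by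
    rw [← hexp, hP2]
  rw [map_sum, map_sum] at key
  simp_rw [map_sum, hΦkron] at key
  have keyR : ∑ μ, ((u τ)ᴴ * u μ).trace • v μ = ((u τ)ᴴ * u τ).trace • v τ := by
    rw [Finset.sum_eq_single τ]
    · intro ν _ hν
      rw [huorth τ ν (Ne.symm hν), zero_smul]
    · intro h; exact absurd (Finset.mem_univ τ) h
  rw [keyR] at key
  have ht := trace_conjT_ne_zero (hu0 τ)
  have hvτ : v τ = (((u τ)ᴴ * u τ).trace)⁻¹ •
      ∑ μ, ∑ ν, ((u τ)ᴴ * (u μ * u ν)).trace • (v μ * v ν) := by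
    rw [key, smul_smul, inv_mul_cancel₀ ht, one_smul]
  rw [hvτ]
  exact Submodule.smul_mem _ _ (Submodule.sum_mem _ fun μ _ => Submodule.sum_mem _ fun ν _ =>
    Submodule.smul_mem _ _ (Submodule.subset_span ⟨(μ, ν), rfl⟩))

variable {n : Type*} [Fintype n] [DecidableEq n]

noncomputable def mon {r : ℕ} (f : Fin r → Matrix n n ℂ) (k : ℕ) (m : Fin k → Fin r) :
    Matrix n n ℂ :=
  (List.ofFn fun i => f (m i)).prod

lemma mon_one {r : ℕ} (f : Fin r → Matrix n n ℂ) (m : Fin 1 → Fin r) :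
    mon f 1 m = f (m 0) := by
  simp [mon, List.ofFn_succ]

lemma mon_succ {r k : ℕ} (f : Fin r → Matrix n n ℂ) (m : Fin (k + 1) → Fin r) :
    mon f (k + 1) m = f (m 0) * mon f k (Fin.tail m) := by
  simp [mon, List.ofFn_succ, Fin.tail]

lemma mon_cons {r k : ℕ} (f : Fin r → Matrix n n ℂ) (a : Fin r) (m : Fin k → Fin r) :
    mon f (k + 1) (Fin.cons a m) = f a * mon f k m := by
  rw [mon_succ]; simp

lemma mon_append {r k l : ℕ} (f : Fin r → Matrix n n ℂ) (a : Fin k → Fin r)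
    (b : Fin l → Fin r) :
    mon f k a * mon f l b = mon f (k + l) (Fin.append a b) := by
  unfold mon
  rw [← List.prod_append, ← List.ofFn_fin_append]
  congr 1
  congr 1
  funext i
  refine Fin.addCases (fun j => ?_) (fun j => ?_) i <;> simp [Fin.append_left, Fin.append_right]

/-- raising the degree by one -/
lemma raise {r : ℕ} (v : Fin r → Matrix n n ℂ)
    (hquad : ∀ τ, v τ ∈ Submodule.span ℂ (Set.range fun p : Fin r × Fin r => v p.1 * v p.2))
    (k : ℕ) (m : Fin (k + 1) → Fin r) :
    mon v (k + 1) m ∈ Submodule.span ℂ (Set.range (mon v (k + 2))) := by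
  have h0 := hquad (m 0)
  have hmap := Submodule.mem_map_of_mem
    (f := LinearMap.mulRight ℂ (mon v k (Fin.tail m))) h0
  rw [Submodule.map_span] at hmap
  have hle : Submodule.span ℂ ((LinearMap.mulRight ℂ (mon v k (Fin.tail m))) ''
      (Set.range fun p : Fin r × Fin r => v p.1 * v p.2)) ≤
      Submodule.span ℂ (Set.range (mon v (k + 2))) := by
    rw [Submodule.span_le]
    rintro x ⟨y, ⟨p, rfl⟩, rfl⟩
    refine Submodule.subset_span ⟨Fin.cons p.1 (Fin.cons p.2 (Fin.tail m)), ?_⟩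
    rw [mon_cons, mon_cons, LinearMap.mulRight_apply, mul_assoc]
  have : mon v (k + 1) m = (LinearMap.mulRight ℂ (mon v k (Fin.tail m))) (v (m 0)) := by
    rw [LinearMap.mulRight_apply, mon_succ]
  rw [this]
  exact hle hmap

/-- monotonicity of the span of degree-`k` monomials -/
lemma mono {r : ℕ} (v : Fin r → Matrix n n ℂ)
    (hquad : ∀ τ, v τ ∈ Submodule.span ℂ (Set.range fun p : Fin r × Fin r => v p.1 * v p.2))
    {k N : ℕ} (hk : 1 ≤ k) (hkN : k ≤ N) :
    Submodule.span ℂ (Set.range (mon v k)) ≤ Submodule.span ℂ (Set.range (mon v N)) := by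
  induction N, hkN using Nat.le_induction with
  | base => exact le_rfl
  | succ N hN ih =>
    refine le_trans ih ?_
    rw [Submodule.span_le]
    rintro x ⟨m, rfl⟩
    obtain ⟨N', rfl⟩ : ∃ N', N = N' + 1 := ⟨N - 1, by omega⟩
    exact raise v hquad N' m
  
/-- every element of the adjoin is a combination of monomials of some degree -/
lemma exists_deg {r : ℕ} (v : Fin r → Matrix n n ℂ) {A : Matrix n n ℂ}
    (hA : A ∈ NonUnitalAlgebra.adjoin ℂ (Set.range v))
    (hquad : ∀ τ, v τ ∈ Submodule.span ℂ (Set.range fun p : Fin r × Fin r => v p.1 * v p.2)) :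
    ∃ N, 1 ≤ N ∧ A ∈ Submodule.span ℂ (Set.range (mon v N)) := by
  have hA' : A ∈ Submodule.span ℂ (Subsemigroup.closure (Set.range v) : Set (Matrix n n ℂ)) := by
    rw [← NonUnitalAlgebra.adjoin_eq_span]
    exact hA
  refine Submodule.span_induction ?_ ?_ ?_ ?_ hA'
  · intro x hx
    have : ∃ N, 1 ≤ N ∧ ∃ m : Fin N → Fin r, x = mon v N m := by
      refine Subsemigroup.closure_induction ?_ ?_ hx
      · rintro y ⟨μ, rfl⟩
        exact ⟨1, le_rfl, fun _ => μ, (mon_one v fun _ => μ).symm⟩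
      · rintro y z - - ⟨N₁, hN₁, m₁, rfl⟩ ⟨N₂, hN₂, m₂, rfl⟩
        exact ⟨N₁ + N₂, by omega, Fin.append m₁ m₂, mon_append v m₁ m₂⟩
    obtain ⟨N, hN, m, rfl⟩ := this
    exact ⟨N, hN, Submodule.subset_span ⟨m, rfl⟩⟩
  · exact ⟨1, le_rfl, Submodule.zero_mem _⟩
  · rintro x y - - ⟨N₁, hN₁, hx⟩ ⟨N₂, hN₂, hy⟩
    exact ⟨max N₁ N₂, le_trans hN₁ (le_max_left _ _),
      Submodule.add_mem _ (mono v hquad hN₁ (le_max_left _ _) hx)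
        (mono v hquad hN₂ (le_max_right _ _) hy)⟩
  · rintro c x - ⟨N, hN, hx⟩
    exact ⟨N, hN, Submodule.smul_mem _ _ hx⟩

lemma mon_mem_adjoin {r : ℕ} (v : Fin r → Matrix n n ℂ) :
    ∀ (k : ℕ) (m : Fin (k + 1) → Fin r),
      mon v (k + 1) m ∈ NonUnitalAlgebra.adjoin ℂ (Set.range v) := by
  intro k
  induction k with
  | zero => intro m; rw [mon_one]; exact NonUnitalAlgebra.subset_adjoin ℂ ⟨m 0, rfl⟩
  | succ k ih =>
    intro m
    rw [mon_succ]
    exact mul_mem (NonUnitalAlgebra.subset_adjoin ℂ ⟨m 0, rfl⟩) (ih (Fin.tail m))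

omit [DecidableEq n] in
lemma kron_expand {ι : Type*} [Fintype ι] (a b : ι → ℂ) (M L : ι → Matrix n n ℂ) :
    (∑ m, a m • M m) ⊗ₖ (∑ m, b m • L m)
      = ∑ m, ∑ m', (a m * b m') • (M m ⊗ₖ L m') := by
  ext x y
  simp only [kroneckerMap_apply, Matrix.sum_apply, Matrix.smul_apply, smul_eq_mul]
  rw [Finset.sum_mul]
  refine Finset.sum_congr rfl fun m _ => ?_
  rw [Finset.mul_sum]
  refine Finset.sum_congr rfl fun m' _ => ?_
  ring

omit [DecidableEq n] in
lemma kron_swap (X Y : Matrix n n ℂ) :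
    (X ⊗ₖ Y).submatrix (Equiv.prodComm n n) (Equiv.prodComm n n) = Y ⊗ₖ X := by
  ext ⟨a, i⟩ ⟨b, j⟩
  simp [mul_comm]

omit [DecidableEq n] in
lemma swap_sq {r : ℕ} (lam rho : Fin r → Matrix n n ℂ)
    (hPP : (∑ μ, lam μ ⊗ₖ rho μ) * (∑ μ, lam μ ⊗ₖ rho μ) = ∑ μ, lam μ ⊗ₖ rho μ) :
    (∑ μ, rho μ ⊗ₖ lam μ) * (∑ μ, rho μ ⊗ₖ lam μ) = ∑ μ, rho μ ⊗ₖ lam μ := by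
  have hQ : (∑ μ, rho μ ⊗ₖ lam μ)
      = (∑ μ, lam μ ⊗ₖ rho μ).submatrix (Equiv.prodComm n n) (Equiv.prodComm n n) := by
    ext x y
    simp only [Matrix.submatrix_apply, Matrix.sum_apply]
    refine Finset.sum_congr rfl fun μ _ => ?_
    rw [← kron_swap (lam μ) (rho μ)]
    rfl
  rw [hQ, Matrix.submatrix_mul_equiv, hPP]

end St6

open St6 in
/-- if the renormalisability conditions hold on all monomials in the Schmidt
factors of the tile projection `P` (with `P² = P`, the factor families nonzero and
Hilbert–Schmidt orthogonal), then they hold on the full (non-unital) support algebras. -/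
theorem statement6 {n : Type*} [Fintype n] [DecidableEq n] (r : ℕ)
    (G : Matrix (n × n) (n × n) ℂ) (hG : G ∈ Matrix.unitaryGroup (n × n) ℂ)
    (lam rho : Fin r → Matrix n n ℂ)
    (hlam0 : ∀ μ, lam μ ≠ 0) (hrho0 : ∀ μ, rho μ ≠ 0)
    (hlamorth : ∀ μ ν, μ ≠ ν → ((lam μ)ᴴ * lam ν).trace = 0)
    (hrhoorth : ∀ μ ν, μ ≠ ν → ((rho μ)ᴴ * rho ν).trace = 0)
    (P : Matrix (n × n) (n × n) ℂ) (hP : P = ∑ μ, lam μ ⊗ₖ rho μ) (hPP : P * P = P)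
    (lamt rhot : Fin r → Matrix n n ℂ)
    (h : ∀ (k : ℕ), 1 ≤ k → ∀ μ ν : Fin k → Fin r,
      Gᴴ * ((List.ofFn fun i => rho (μ i)).prod ⊗ₖ (List.ofFn fun i => lam (ν i)).prod) * G =
        (List.ofFn fun i => rhot (μ i)).prod ⊗ₖ (List.ofFn fun i => lamt (ν i)).prod) :
    ∀ A ∈ NonUnitalAlgebra.adjoin ℂ (Set.range rho),
    ∀ B ∈ NonUnitalAlgebra.adjoin ℂ (Set.range lam),
    ∃ At ∈ NonUnitalAlgebra.adjoin ℂ (Set.range rhot),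
    ∃ Bt ∈ NonUnitalAlgebra.adjoin ℂ (Set.range lamt),
      Gᴴ * (A ⊗ₖ B) * G = At ⊗ₖ Bt := by
  intro A hA B hB
  subst hP
  have hquadrho := extract lam rho hlam0 hlamorth hPP
  have hquadlam := extract rho lam hrho0 hrhoorth (swap_sq lam rho hPP)
  obtain ⟨NA, hNA1, hAs⟩ := exists_deg rho hA hquadrho
  obtain ⟨NB, hNB1, hBs⟩ := exists_deg lam hB hquadlam
  obtain ⟨N, hN1, hA', hB'⟩ : ∃ N, 1 ≤ N ∧ A ∈ Submodule.span ℂ (Set.range (mon rho N)) ∧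
      B ∈ Submodule.span ℂ (Set.range (mon lam N)) :=
    ⟨max NA NB, le_trans hNA1 (le_max_left _ _),
      mono rho hquadrho hNA1 (le_max_left _ _) hAs,
      mono lam hquadlam hNB1 (le_max_right _ _) hBs⟩
  obtain ⟨N', rfl⟩ : ∃ N', N = N' + 1 := ⟨N - 1, by omega⟩
  rw [Submodule.mem_span_range_iff_exists_fun] at hA' hB'
  obtain ⟨a, ha⟩ := hA'
  obtain ⟨b, hb⟩ := hB'
  have h' : ∀ m m' : Fin (N' + 1) → Fin r,
      Gᴴ * (mon rho (N' + 1) m ⊗ₖ mon lam (N' + 1) m') * G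
        = mon rhot (N' + 1) m ⊗ₖ mon lamt (N' + 1) m' :=
    fun m m' => h (N' + 1) (by omega) m m'
  refine ⟨∑ m, a m • mon rhot (N' + 1) m,
    Submodule.sum_mem _ fun m _ => SMulMemClass.smul_mem (a m) (mon_mem_adjoin rhot N' m),
    ∑ m, b m • mon lamt (N' + 1) m,
    Submodule.sum_mem _ fun m _ => SMulMemClass.smul_mem (b m) (mon_mem_adjoin lamt N' m), ?_⟩
  calc Gᴴ * (A ⊗ₖ B) * G
      = Gᴴ * ((∑ m, a m • mon rho (N' + 1) m) ⊗ₖ (∑ m, b m • mon lam (N' + 1) m)) * G := by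
        rw [ha, hb]
    _ = ∑ m, ∑ m', (a m * b m') •
          (Gᴴ * (mon rho (N' + 1) m ⊗ₖ mon lam (N' + 1) m') * G) := by
        rw [kron_expand]
        simp only [Matrix.mul_sum, Matrix.sum_mul, mul_smul_comm, smul_mul_assoc]
    _ = ∑ m, ∑ m', (a m * b m') • (mon rhot (N' + 1) m ⊗ₖ mon lamt (N' + 1) m') := by
        simp_rw [h']
    _ = (∑ m, a m • mon rhot (N' + 1) m) ⊗ₖ (∑ m, b m • mon lamt (N' + 1) m) :=
        (kron_expand _ _ _ _).symm
end

section
/- There do not exist φ ∈ ℝ and unitaries U, U′ on ℂ² such that C_φ (U ⊗ U) C_φ = (U′ ⊗ U′) S as operators on ℂ² ⊗ ℂ². -/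
open Kronecker Matrix

noncomputable section

/-- The controlled-phase gate `C_φ` on `ℂ² ⊗ ℂ²`:
`C_φ (|a⟩⊗|b⟩) = e^{iφab} |a⟩⊗|b⟩`. -/
def Cphase (φ : ℝ) : Matrix (Fin 2 × Fin 2) (Fin 2 × Fin 2) ℂ :=
  Matrix.diagonal fun p => Complex.exp (Complex.I * (φ : ℂ) * (p.1.val : ℂ) * (p.2.val : ℂ))

/-- The swap operator on `ℂ² ⊗ ℂ²`, determined by `S(x ⊗ y) = y ⊗ x`. -/
def swapM2 : Matrix (Fin 2 × Fin 2) (Fin 2 × Fin 2) ℂ :=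
  fun p q => if p.1 = q.2 ∧ p.2 = q.1 then 1 else 0

/-- Multiplying by the swap on the right just swaps the column index. -/
lemma mul_swapM2_apply (M : Matrix (Fin 2 × Fin 2) (Fin 2 × Fin 2) ℂ) (p : Fin 2 × Fin 2)
    (c d : Fin 2) : (M * swapM2) p (c, d) = M p (d, c) := by
  simp only [Matrix.mul_apply, swapM2, Fintype.sum_prod_type]
  simp [ite_and, mul_ite, Finset.sum_ite_eq']

/-- there are no `φ ∈ ℝ` and unitaries `U, U'` on `ℂ²` with
`C_φ (U ⊗ U) C_φ = (U' ⊗ U') S`. -/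
theorem statement8 :
    ¬ ∃ (φ : ℝ) (U U' : Matrix (Fin 2) (Fin 2) ℂ),
      U ∈ Matrix.unitaryGroup (Fin 2) ℂ ∧ U' ∈ Matrix.unitaryGroup (Fin 2) ℂ ∧
      Cphase φ * (U ⊗ₖ U) * Cphase φ = (U' ⊗ₖ U') * swapM2 := by
  rintro ⟨φ, U, U', hU, hU', h⟩
  -- determinant of U is nonzero
  have hdet : U.det ≠ 0 := by
    intro h0
    have h1 := congrArg Matrix.det hU.1
    rw [Matrix.det_mul, h0, mul_zero, Matrix.det_one] at h1
    exact zero_ne_one h1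
  -- entrywise equation: e^{iφ(ab+cd)} U_{ac} U_{bd} = U'_{ad} U'_{bc}
  have he : ∀ a b c d : Fin 2,
      Complex.exp (Complex.I * (φ : ℂ) * (a.val : ℂ) * (b.val : ℂ)) * (U a c * U b d) *
        Complex.exp (Complex.I * (φ : ℂ) * (c.val : ℂ) * (d.val : ℂ)) = U' a d * U' b c := by
    intro a b c d
    have := congrFun (congrFun h (a, b)) (c, d)
    rw [mul_swapM2_apply] at this
    simpa [Cphase, Matrix.mul_diagonal, Matrix.diagonal_mul, Matrix.kroneckerMap_apply]
      using this
  -- multiplying the (b,d)=(0,0)·(1,1) equations against (0,1)·(1,0) forces U_{ac} = 0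
  have key : ∀ a c : Fin 2, U a c = 0 := by
    intro a c
    have e1 := he a 0 c 0
    have e2 := he a 1 c 1
    have e3 := he a 0 c 1
    have e4 := he a 1 c 0
    simp only [Fin.val_zero, Fin.val_one, Nat.cast_zero, Nat.cast_one, mul_zero, mul_one,
      Complex.exp_zero, one_mul] at e1 e2 e3 e4
    have p1 : (U a c * U 0 0) * (Complex.exp (Complex.I * (φ : ℂ) * (a.val : ℂ)) *
        (U a c * U 1 1) * Complex.exp (Complex.I * (φ : ℂ) * (c.val : ℂ))) =
        (U' a 0 * U' 0 c) * (U' a 1 * U' 1 c) := by rw [e1, e2]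
    have p2 : ((U a c * U 0 1) * Complex.exp (Complex.I * (φ : ℂ) * (c.val : ℂ))) *
        (Complex.exp (Complex.I * (φ : ℂ) * (a.val : ℂ)) * (U a c * U 1 0)) =
        (U' a 1 * U' 0 c) * (U' a 0 * U' 1 c) := by rw [e3, e4]
    have hz : Complex.exp (Complex.I * (φ : ℂ) * (a.val : ℂ)) *
        Complex.exp (Complex.I * (φ : ℂ) * (c.val : ℂ)) *
        (U a c * U a c * (U 0 0 * U 1 1 - U 0 1 * U 1 0)) = 0 := by
      linear_combination p1 - p2
    have hne : Complex.exp (Complex.I * (φ : ℂ) * (a.val : ℂ)) *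
        Complex.exp (Complex.I * (φ : ℂ) * (c.val : ℂ)) ≠ 0 :=
      mul_ne_zero (Complex.exp_ne_zero _) (Complex.exp_ne_zero _)
    have hz2 := (mul_eq_zero.mp hz).resolve_left hne
    rcases mul_eq_zero.mp hz2 with h' | h'
    · exact (mul_self_eq_zero).mp h'
    · exfalso; apply hdet; rw [Matrix.det_fin_two]; linear_combination h'
  apply hdet
  simp [Matrix.det_fin_two, key]
end
end

section
/- Let φ ∈ ℝ and let U, V be unitaries on ℂ² such that V ⊗ V = C_φ (U ⊗ U) C_φ. Then e^{iφ} = 1, or U is diagonal in the computational basis, or U is antidiagonal in the computational basis. -/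
open Kronecker Matrix

noncomputable section

/-- if `V ⊗ V = C_φ (U ⊗ U) C_φ` for unitaries `U, V` on `ℂ²`, then
`e^{iφ} = 1`, or `U` is diagonal, or `U` is antidiagonal in the computational basis. -/
theorem statement9 (φ : ℝ) (U V : Matrix (Fin 2) (Fin 2) ℂ)
    (hU : U ∈ Matrix.unitaryGroup (Fin 2) ℂ) (hV : V ∈ Matrix.unitaryGroup (Fin 2) ℂ)
    (h : V ⊗ₖ V = Cphase φ * (U ⊗ₖ U) * Cphase φ) :
    Complex.exp (Complex.I * (φ : ℂ)) = 1 ∨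
    (U 0 1 = 0 ∧ U 1 0 = 0) ∨
    (U 0 0 = 0 ∧ U 1 1 = 0) := by
  by_cases hc : Complex.exp (Complex.I * (φ : ℂ)) = 1
  · exact Or.inl hc
  right
  set c : ℂ := Complex.exp (Complex.I * (φ : ℂ)) with hcdef
  have hc0 : c ≠ 0 := Complex.exp_ne_zero _
  have hc1 : (1 : ℂ) - c ≠ 0 := sub_ne_zero.2 (Ne.symm hc)
  have key : ∀ a b c' d : Fin 2, V a c' * V b d =
      Complex.exp (Complex.I * (φ : ℂ) * (a.val : ℂ) * (b.val : ℂ)) * (U a c' * U b d) *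
        Complex.exp (Complex.I * (φ : ℂ) * (c'.val : ℂ) * (d.val : ℂ)) := by
    intro a b c' d
    have := Matrix.ext_iff.mpr h (a, b) (c', d)
    simpa [Cphase, Matrix.mul_diagonal, Matrix.diagonal_mul,
      Matrix.kroneckerMap_apply, mul_assoc, mul_comm, mul_left_comm] using this
  have e1 := key 1 1 1 1
  have e2 := key 1 1 1 0
  have e3 := key 1 1 0 0
  have e4 := key 0 1 1 1
  have e5 := key 0 0 1 1
  simp only [Fin.val_one, Fin.val_zero, Nat.cast_one, Nat.cast_zero, mul_one, mul_zero,
    Complex.exp_zero, one_mul, ← hcdef] at e1 e2 e3 e4 e5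
  have hx : U 1 1 * U 1 0 = 0 := by
    have h1 : (V 1 1 * V 1 0) * (V 1 1 * V 1 0) = (V 1 1 * V 1 1) * (V 1 0 * V 1 0) := by ring
    rw [e1, e2, e3] at h1
    have h2 : c ^ 2 * (1 - c) * (U 1 1 * U 1 0) ^ 2 = 0 := by linear_combination h1
    have h3 : (U 1 1 * U 1 0) ^ 2 = 0 := by
      rcases mul_eq_zero.1 h2 with h' | h'
      · exact absurd h' (mul_ne_zero (pow_ne_zero _ hc0) hc1)
      · exact h'
    exact pow_eq_zero_iff (two_ne_zero) |>.1 h3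
  have hy : U 0 1 * U 1 1 = 0 := by
    have h1 : (V 0 1 * V 1 1) * (V 0 1 * V 1 1) = (V 0 1 * V 0 1) * (V 1 1 * V 1 1) := by ring
    rw [e1, e4, e5] at h1
    have h2 : c ^ 2 * (1 - c) * (U 0 1 * U 1 1) ^ 2 = 0 := by linear_combination h1
    have h3 : (U 0 1 * U 1 1) ^ 2 = 0 := by
      rcases mul_eq_zero.1 h2 with h' | h'
      · exact absurd h' (mul_ne_zero (pow_ne_zero _ hc0) hc1)
      · exact h'
    exact pow_eq_zero_iff (two_ne_zero) |>.1 h3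
  by_cases h11 : U 1 1 = 0
  · -- antidiagonal case: show U 0 0 = 0 from unitarity
    right
    refine ⟨?_, h11⟩
    have hu : U * star U = 1 := (Matrix.mem_unitaryGroup_iff).mp hU
    have hd : U 1 0 * (starRingEnd ℂ) (U 1 0) + U 1 1 * (starRingEnd ℂ) (U 1 1) = 1 := by
      have := Matrix.ext_iff.mpr hu 1 1
      simpa [Matrix.mul_apply, Fin.sum_univ_two, Matrix.conjTranspose_apply, Matrix.one_apply]
        using this
    have ho : U 0 0 * (starRingEnd ℂ) (U 1 0) + U 0 1 * (starRingEnd ℂ) (U 1 1) = 0 := by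
      have := Matrix.ext_iff.mpr hu 0 1
      simpa [Matrix.mul_apply, Fin.sum_univ_two, Matrix.conjTranspose_apply, Matrix.one_apply]
        using this
    rw [h11] at hd ho
    simp only [map_zero, mul_zero, add_zero] at hd ho
    have h10 : (starRingEnd ℂ) (U 1 0) ≠ 0 := by
      intro h0
      rw [h0, mul_zero] at hd
      exact one_ne_zero hd.symm
    exact (mul_eq_zero.1 ho).resolve_right h10
  · -- diagonal case
    left
    exact ⟨(mul_eq_zero.1 hy).resolve_right h11, (mul_eq_zero.1 hx).resolve_left h11⟩

end
end

section
/- Let φ ∈ ℝ, let U be a unitary on ℂ², and set G := C_φ (U ⊗ U) C_φ. Suppose there exist orthonormal bases {|μ₀⟩, |μ₁⟩} and {|μ̃₀⟩, |μ̃₁⟩} of ℂ² such that G (|μ_i⟩⟨μ_i| ⊗ |μ_j⟩⟨μ_j|) G* = |μ̃_i⟩⟨μ̃_i| ⊗ |μ̃_j⟩⟨μ̃_j| for all i, j ∈ {0,1}. Then e^{iφ} = 1, or U is diagonal in the computational basis, or U is antidiagonal in the computational basis. -/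
open Kronecker Matrix

noncomputable section

/-- The rank-one operator `|v⟩⟨v|`. -/
def outer (v : Fin 2 → ℂ) : Matrix (Fin 2) (Fin 2) ℂ := Matrix.vecMulVec v (star v)

/-! Write `G = C (U ⊗ U) C` with `C = diag(ω^{ab})`, `ω = e^{iφ}`, and put
`P = |μ₀⟩⟨μ₀|`, `Q = |μ̃₀⟩⟨μ̃₀|`. Summing the hypothesis over `j` gives
`G (P ⊗ 1) = (Q ⊗ 1) G`. Read block-wise in the second tensor factor, block `(b, b')` of this
identity is `U_{bb'} • D^b U D^{b'} P = U_{bb'} • Q D^b U D^{b'}` with `D = diag(1, ω)`. If `U`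
is neither diagonal nor antidiagonal, all its entries are nonzero, and blocks `(0,0)`, `(0,1)`,
`(1,0)` give `UP = QU`, `UDP = QUD`, `DUP = QDU`. Hence `P` and `Q` commute with `D`, so for
`ω ≠ 1` both are diagonal, and then `UP = QU` with `U₀₀, U₀₁ ≠ 0` makes `P` scalar, which a
rank-one projector on `ℂ²` is not. -/

namespace Matrix

variable {m n R : Type*} [Fintype m] [Fintype n] [DecidableEq n]

theorem mul_kronecker_one_apply [CommSemiring R] (M : Matrix (m × n) (m × n) R)
    (A : Matrix m m R) (a a' : m) (b b' : n) :
    (M * (A ⊗ₖ (1 : Matrix n n R))) (a, b) (a', b') = ∑ i, M (a, b) (i, b') * A i a' := by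
  simp [mul_apply, Fintype.sum_prod_type, one_apply]

theorem kronecker_one_mul_apply [CommSemiring R] (B : Matrix m m R)
    (M : Matrix (m × n) (m × n) R) (a a' : m) (b b' : n) :
    ((B ⊗ₖ (1 : Matrix n n R)) * M) (a, b) (a', b') = ∑ i, B a i * M (i, b) (a', b') := by
  simp [mul_apply, Fintype.sum_prod_type, one_apply]

variable [DecidableEq m]

theorem diagonal_mul_kronecker_mul_diagonal_apply [CommSemiring R] (c : m × n → R)
    (U : Matrix m m R) (V : Matrix n n R) (a a' : m) (b b' : n) :
    (diagonal c * (U ⊗ₖ V) * diagonal c) (a, b) (a', b') =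
      V b b' * (diagonal (fun i => c (i, b)) * U * diagonal (fun i => c (i, b'))) a a' := by
  simp only [diagonal_mul, mul_diagonal, kroneckerMap_apply]
  ring

theorem block_mul_eq_mul_block_of_mul_kronecker_one_eq [CommRing R] [NoZeroDivisors R]
    (c : m × n → R) (U : Matrix m m R) (V : Matrix n n R) (A B : Matrix m m R)
    (h : diagonal c * (U ⊗ₖ V) * diagonal c * (A ⊗ₖ 1) =
      (B ⊗ₖ 1) * (diagonal c * (U ⊗ₖ V) * diagonal c))
    {b b' : n} (hV : V b b' ≠ 0) :
    diagonal (fun i => c (i, b)) * U * diagonal (fun i => c (i, b')) * A =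
      B * (diagonal (fun i => c (i, b)) * U * diagonal (fun i => c (i, b'))) := by
  ext a a'
  have hab := congr_fun₂ h (a, b) (a', b')
  simp only [mul_kronecker_one_apply, kronecker_one_mul_apply,
    diagonal_mul_kronecker_mul_diagonal_apply] at hab
  apply mul_left_cancel₀ hV
  rw [mul_apply, mul_apply, Finset.mul_sum, Finset.mul_sum]
  refine (Finset.sum_congr rfl fun i _ => ?_).trans
    (hab.trans (Finset.sum_congr rfl fun i _ => ?_)) <;> ring

theorem isDiag_of_commute_diagonal [CommRing R] [NoZeroDivisors R] {d : m → R}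
    (hd : Function.Injective d) {A : Matrix m m R} (h : Commute (diagonal d) A) : A.IsDiag := by
  intro i j hij
  have hij' := congr_fun₂ h.eq i j
  simp only [diagonal_mul, mul_diagonal] at hij'
  have : (d i - d j) * A i j = 0 := by linear_combination hij'
  exact (mul_eq_zero.1 this).resolve_left (sub_ne_zero.2 (hd.ne hij))

theorem eq_diagonal_const_of_intertwine {K : Type*} [Field K] {U P Q : Matrix m m K}
    (hU : IsUnit U) {d : m → K} (hd : Function.Injective d) (h : U * P = Q * U)
    (hright : U * diagonal d * P = Q * (U * diagonal d))
    (hleft : diagonal d * U * P = Q * (diagonal d * U)) (i : m) (hUi : ∀ j, U i j ≠ 0) :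
    P = diagonal fun _ => Q i i := by
  have hPd : Commute (diagonal d) P := hU.mul_left_cancel <| by
    rw [← mul_assoc, hright, ← mul_assoc U, h, mul_assoc]
  have hQd : Commute (diagonal d) Q := hU.mul_right_cancel <| by
    rw [mul_assoc, ← h, ← mul_assoc, hleft, mul_assoc]
  have hP := (isDiag_of_commute_diagonal hd hPd).diagonal_diag
  have hQ := (isDiag_of_commute_diagonal hd hQd).diagonal_diag
  rw [← hP]
  congr 1
  funext j
  have hij := congr_fun₂ h i j
  rw [← hP, ← hQ, mul_diagonal, diagonal_mul] at hij
  exact mul_left_cancel₀ (hUi j) (hij.trans (mul_comm _ _))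

theorem norm_apply_eq_of_mem_unitaryGroup_fin_two {𝕜 : Type*} [RCLike 𝕜]
    {U : Matrix (Fin 2) (Fin 2) 𝕜} (hU : U ∈ unitaryGroup (Fin 2) 𝕜) :
    ‖U 0 1‖ = ‖U 1 0‖ ∧ ‖U 0 0‖ = ‖U 1 1‖ := by
  have r0 := congr_fun₂ (mem_unitaryGroup_iff.1 hU) 0 0
  have c0 := congr_fun₂ (mem_unitaryGroup_iff'.1 hU) 0 0
  have c1 := congr_fun₂ (mem_unitaryGroup_iff'.1 hU) 1 1
  simp only [mul_apply, Fin.sum_univ_two, star_apply, RCLike.star_def, RCLike.mul_conj,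
    RCLike.conj_mul, one_apply_eq] at r0 c0 c1
  norm_cast at r0 c0 c1
  constructor <;> nlinarith [norm_nonneg (U 0 1), norm_nonneg (U 1 0), norm_nonneg (U 0 0),
    norm_nonneg (U 1 1)]

theorem apply_ne_zero_of_mem_unitaryGroup_fin_two {𝕜 : Type*} [RCLike 𝕜]
    {U : Matrix (Fin 2) (Fin 2) 𝕜} (hU : U ∈ unitaryGroup (Fin 2) 𝕜)
    (hdiag : ¬(U 0 1 = 0 ∧ U 1 0 = 0)) (hanti : ¬(U 0 0 = 0 ∧ U 1 1 = 0)) (i j : Fin 2) :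
    U i j ≠ 0 := by
  obtain ⟨h01, h00⟩ := norm_apply_eq_of_mem_unitaryGroup_fin_two hU
  fin_cases i <;> fin_cases j
  · exact fun h0 => hanti ⟨h0, norm_eq_zero.1 (h00 ▸ norm_eq_zero.2 h0)⟩
  · exact fun h0 => hdiag ⟨h0, norm_eq_zero.1 (h01 ▸ norm_eq_zero.2 h0)⟩
  · exact fun h0 => hdiag ⟨norm_eq_zero.1 (h01 ▸ norm_eq_zero.2 h0), h0⟩
  · exact fun h0 => hanti ⟨norm_eq_zero.1 (h00 ▸ norm_eq_zero.2 h0), h0⟩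

end Matrix

theorem Cphase_mem_unitaryGroup (φ : ℝ) : Cphase φ ∈ unitaryGroup (Fin 2 × Fin 2) ℂ := by
  rw [mem_unitaryGroup_iff', star_eq_conjTranspose, Cphase, diagonal_conjTranspose,
    diagonal_mul_diagonal, ← diagonal_one]
  congr 1
  funext p
  rw [Pi.star_apply, Complex.star_def, ← Complex.exp_conj, ← Complex.exp_add]
  simp

theorem outer_add_outer_eq_one (μ : Fin 2 → Fin 2 → ℂ)
    (hμ : ∀ i j, dotProduct (star (μ i)) (μ j) = if i = j then 1 else 0) :
    outer (μ 0) + outer (μ 1) = 1 := by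
  have hM : (of μ)ᵀᴴ * (of μ)ᵀ = 1 := by
    ext i j
    simpa [mul_apply, dotProduct, one_apply] using hμ i j
  have hM' : (of μ)ᵀ * (of μ)ᵀᴴ = 1 := mul_eq_one_comm.1 hM
  ext k l
  simpa [mul_apply, outer, vecMulVec_apply, Fin.sum_univ_two] using congr_fun₂ hM' k l

theorem outer_ne_scalar {v : Fin 2 → ℂ} (hv : star v ⬝ᵥ v = 1) (x : ℂ) :
    outer v ≠ diagonal fun _ => x := by
  intro hx
  have htrace : 2 * x = 1 := by
    have := congr_arg trace hx
    rw [outer, trace_vecMulVec, dotProduct_comm, hv, trace_diagonal] at this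
    simp only [Finset.sum_const, Finset.card_univ, Fintype.card_fin, nsmul_eq_mul,
      Nat.cast_ofNat] at this
    linear_combination -this
  have hidem : x * x = x := by
    have := congr_arg (fun M => (M * M) 0 0) hx
    simp only [outer, vecMulVec_mul_vecMulVec, hv, one_smul, diagonal_mul_diagonal,
      diagonal_apply_eq] at this
    rw [← this]
    simpa [outer] using congr_fun₂ hx 0 0
  have : (1 : ℂ) = 0 := by linear_combination (2 * x - 1) * htrace - 4 * hidem
  exact one_ne_zero this

theorem mul_outer_kronecker_one_eq {G : Matrix (Fin 2 × Fin 2) (Fin 2 × Fin 2) ℂ}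
    (hG : G ∈ unitaryGroup (Fin 2 × Fin 2) ℂ) {μ μt : Fin 2 → Fin 2 → ℂ}
    (hμ : ∀ i j, dotProduct (star (μ i)) (μ j) = if i = j then 1 else 0)
    (hμt : ∀ i j, dotProduct (star (μt i)) (μt j) = if i = j then 1 else 0)
    (h : ∀ i j, G * (outer (μ i) ⊗ₖ outer (μ j)) * Gᴴ = outer (μt i) ⊗ₖ outer (μt j))
    (i : Fin 2) : G * (outer (μ i) ⊗ₖ 1) = (outer (μt i) ⊗ₖ 1) * G := by
  have hconj := congr_arg₂ (· + ·) (h i 0) (h i 1)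
  simp only [← add_mul, ← mul_add, ← kronecker_add, outer_add_outer_eq_one μ hμ,
    outer_add_outer_eq_one μt hμt] at hconj
  rw [← hconj, mul_assoc _ Gᴴ, ← star_eq_conjTranspose, mem_unitaryGroup_iff'.1 hG, mul_one]

/-- if `G = C_φ (U ⊗ U) C_φ` conjugates a product-projector orthonormal basis of
`ℂ² ⊗ ℂ²` to another one, then `e^{iφ} = 1`, or `U` is diagonal, or `U` is antidiagonal in the
computational basis. -/
theorem statement10 (φ : ℝ) (U : Matrix (Fin 2) (Fin 2) ℂ)
    (hU : U ∈ Matrix.unitaryGroup (Fin 2) ℂ)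
    (G : Matrix (Fin 2 × Fin 2) (Fin 2 × Fin 2) ℂ)
    (hG : G = Cphase φ * (U ⊗ₖ U) * Cphase φ)
    (μ μt : Fin 2 → (Fin 2 → ℂ))
    (hμ : ∀ i j, dotProduct (star (μ i)) (μ j) = if i = j then 1 else 0)
    (hμt : ∀ i j, dotProduct (star (μt i)) (μt j) = if i = j then 1 else 0)
    (h : ∀ i j, G * (outer (μ i) ⊗ₖ outer (μ j)) * Gᴴ = outer (μt i) ⊗ₖ outer (μt j)) :
    Complex.exp (Complex.I * (φ : ℂ)) = 1 ∨
    (U 0 1 = 0 ∧ U 1 0 = 0) ∨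
    (U 0 0 = 0 ∧ U 1 1 = 0) := by
  refine or_iff_not_imp_left.2 fun hω => or_iff_not_imp_left.2 fun hdiag => ?_
  by_contra hanti
  have hUne := apply_ne_zero_of_mem_unitaryGroup_fin_two hU hdiag hanti
  have hGunit : G ∈ unitaryGroup (Fin 2 × Fin 2) ℂ := hG ▸
    mul_mem (mul_mem (Cphase_mem_unitaryGroup φ) (kronecker_mem_unitary hU hU))
      (Cphase_mem_unitaryGroup φ)
  have hint := mul_outer_kronecker_one_eq hGunit hμ hμt h 0
  rw [hG, Cphase] at hint
  have h00 := block_mul_eq_mul_block_of_mul_kronecker_one_eq _ U U _ _ hint (hUne 0 0)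
  have h01 := block_mul_eq_mul_block_of_mul_kronecker_one_eq _ U U _ _ hint (hUne 0 1)
  have h10 := block_mul_eq_mul_block_of_mul_kronecker_one_eq _ U U _ _ hint (hUne 1 0)
  simp only [Fin.isValue, Fin.coe_ofNat_eq_mod, Nat.zero_mod, CharP.cast_eq_zero, mul_zero,
    Complex.exp_zero, diagonal_one, one_mul, mul_one, Nat.mod_succ, Nat.cast_one] at h00 h01 h10
  have hd : Function.Injective fun i : Fin 2 => Complex.exp (Complex.I * φ * i) := by
    intro i j hij
    fin_cases i <;> fin_cases j <;> simp at hij ⊢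
    exacts [hω hij.symm, hω hij]
  exact outer_ne_scalar (by simpa using hμ 0 0) _ <|
    eq_diagonal_const_of_intertwine (Unitary.isUnit_coe (U := ⟨U, hU⟩)) hd h00 h01 h10 0
      (hUne 0)
end
end

section
/- Let G be a unitary on ℂ² ⊗ ℂ² commuting with the swap operator S, and suppose there exist orthonormal bases {|μ₀⟩, |μ₁⟩} and {|μ̃₀⟩, |μ̃₁⟩} of ℂ² such that G (|μ_i⟩⟨μ_i| ⊗ |μ_j⟩⟨μ_j|) G* = |μ̃_i⟩⟨μ̃_i| ⊗ |μ̃_j⟩⟨μ̃_j| for all i, j ∈ {0,1}. Then there exist a unitary V on ℂ², real numbers θ₀₀, θ₁₁, and a complex number c with |c| = 1, such that G = c (V ⊗ V) F, where F := e^{iθ₀₀} |μ₀⟩⟨μ₀| ⊗ |μ₀⟩⟨μ₀| + |μ₀⟩⟨μ₀| ⊗ |μ₁⟩⟨μ₁| + |μ₁⟩⟨μ₁| ⊗ |μ₀⟩⟨μ₀| + e^{iθ₁₁} |μ₁⟩⟨μ₁| ⊗ |μ₁⟩⟨μ₁|, V|μ_i⟩ is proportional to |μ̃_i⟩ for i =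 0, 1, and the matrix of V in the basis {|μ₀⟩, |μ₁⟩} has equal, real, nonnegative diagonal entries. -/
open Kronecker Matrix

noncomputable section

/-!
On the product basis `μ i ⊗ μ j`, the hypothesis says that `G` maps each vector to a phase
`exp (α i j * I)` times `μt i ⊗ μt j`: two rank-one projectors `|w⟩⟨w|`, `|v⟩⟨v|` agree only if
`w` is a unimodular multiple of `v`. Commuting with the swap forces `α 0 1 = α 1 0` (modulo `2π`).
A local unitary `V` with `V μ i = exp (β i * I) • μt i` accounts for phases `β i + β j`; taking
`β i = -arg ⟨μ i, μt i⟩` makes the diagonal entries `⟨μ i, V μ i⟩ = ‖⟨μ i, μt i⟩‖` real and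
nonnegative, and they are equal because `(⟨μ i, μt j⟩)ᵢⱼ` is a `2 × 2` unitary matrix. The global
phase `c = exp ((α 0 1 - β 0 - β 1) * I)` absorbs the off-diagonal phases, and the gate `F` the
two that remain.
-/

namespace Matrix

variable {R l m n k : Type*}

def kronVec [Mul R] (a : m → R) (b : n → R) : m × n → R := fun p => a p.1 * b p.2

section CommSemiring

variable [CommSemiring R]

theorem kronVec_smul_kronVec (r s : R) (a : m → R) (b : n → R) :
    kronVec (r • a) (s • b) = (r * s) • kronVec a b := by
  ext p
  simp only [kronVec, Pi.smul_apply, smul_eq_mul]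
  ring

@[simp]
theorem zero_kronVec (b : n → R) : kronVec (0 : m → R) b = 0 := by
  ext p
  simp [kronVec]

@[simp]
theorem kronVec_zero (a : m → R) : kronVec a (0 : n → R) = 0 := by
  ext p
  simp [kronVec]

theorem kronecker_mulVec_kronVec [Fintype m] [Fintype n] (A : Matrix l m R) (B : Matrix k n R)
    (a : m → R) (b : n → R) : (A ⊗ₖ B) *ᵥ kronVec a b = kronVec (A *ᵥ a) (B *ᵥ b) := by
  ext ⟨i, j⟩
  simp only [mulVec, dotProduct, kronVec, kroneckerMap_apply, Fintype.sum_prod_type,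
    Finset.sum_mul_sum]
  exact Finset.sum_congr rfl fun _ _ => Finset.sum_congr rfl fun _ _ => by ring

theorem kronVec_dotProduct_kronVec [Fintype m] [Fintype n] (a c : m → R) (b d : n → R) :
    kronVec a b ⬝ᵥ kronVec c d = (a ⬝ᵥ c) * (b ⬝ᵥ d) := by
  simp only [dotProduct, kronVec, Fintype.sum_prod_type, Finset.sum_mul_sum]
  exact Finset.sum_congr rfl fun _ _ => Finset.sum_congr rfl fun _ _ => by ring

theorem vecMulVec_kronecker_vecMulVec (a : l → R) (b : m → R) (c : n → R) (d : k → R) :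
    vecMulVec a b ⊗ₖ vecMulVec c d = vecMulVec (kronVec a c) (kronVec b d) := by
  ext ⟨i, j⟩ ⟨p, q⟩
  simp only [kroneckerMap_apply, vecMulVec_apply, kronVec]
  ring

theorem star_kronVec [StarRing R] (a : m → R) (b : n → R) :
    star (kronVec a b) = kronVec (star a) (star b) := by
  ext p
  simp [kronVec]

end CommSemiring

theorem kronVec_ne_zero [MulZeroClass R] [NoZeroDivisors R] {a : m → R} {b : n → R}
    (ha : a ≠ 0) (hb : b ≠ 0) : kronVec a b ≠ 0 := by
  obtain ⟨i, hi⟩ := Function.ne_iff.mp ha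
  obtain ⟨j, hj⟩ := Function.ne_iff.mp hb
  exact Function.ne_iff.mpr ⟨(i, j), mul_ne_zero hi hj⟩

theorem mul_vecMulVec_star_mul_conjTranspose [Fintype n] [CommSemiring R] [StarRing R]
    (G : Matrix m n R) (v : n → R) :
    G * vecMulVec v (star v) * Gᴴ = vecMulVec (G *ᵥ v) (star (G *ᵥ v)) := by
  rw [mul_vecMulVec, vecMulVec_mul, vecMul_conjTranspose, star_star]

open scoped ComplexOrder in
theorem exists_norm_eq_one_smul_of_vecMulVec_star_eq [Fintype n] {v w : n → ℂ} (hv : v ≠ 0)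
    (h : vecMulVec w (star w) = vecMulVec v (star v)) : ∃ z : ℂ, ‖z‖ = 1 ∧ w = z • v := by
  have hvv : star v ⬝ᵥ v ≠ 0 := dotProduct_star_self_eq_zero.not.mpr hv
  have hmul := congrArg (· *ᵥ v) h
  simp only [vecMulVec_mulVec, op_smul_eq_smul] at hmul
  have hwv : star w ⬝ᵥ v ≠ 0 := by
    intro h0
    rw [h0, zero_smul] at hmul
    exact smul_ne_zero hvv hv hmul.symm
  set z := (star w ⬝ᵥ v)⁻¹ * (star v ⬝ᵥ v)
  have hw : w = z • v := by rw [mul_smul, ← hmul, smul_smul, inv_mul_cancel₀ hwv, one_smul]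
  refine ⟨z, CStarRing.norm_of_mem_unitary (Unitary.mem_iff_star_mul_self.mpr ?_), hw⟩
  have htr := congrArg trace h
  simp only [trace_vecMulVec, dotProduct_comm _ (star _)] at htr
  rw [hw, star_smul, smul_dotProduct, dotProduct_smul, smul_smul, smul_eq_mul] at htr
  exact mul_right_cancel₀ hvv (htr.trans (one_mul _).symm)

theorem norm_apply_zero_zero_eq_of_mem_unitaryGroup {M : Matrix (Fin 2) (Fin 2) ℂ}
    (hM : M ∈ unitaryGroup (Fin 2) ℂ) : ‖M 0 0‖ = ‖M 1 1‖ := by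
  have row_sum (U : Matrix (Fin 2) (Fin 2) ℂ) (hU : U ∈ unitaryGroup (Fin 2) ℂ) (i : Fin 2) :
      ‖U i 0‖ ^ 2 + ‖U i 1‖ ^ 2 = 1 := by
    have := congr_fun₂ (mem_unitaryGroup_iff.mp hU) i i
    simp only [mul_apply, star_apply, ← starRingEnd_apply, Complex.mul_conj', one_apply_eq,
      Fin.sum_univ_two] at this
    exact_mod_cast this
  have hrow := row_sum M hM 0
  have hcol := row_sum (star M) (Unitary.star_mem hM) 1
  simp only [star_apply, norm_star] at hcol
  exact (sq_eq_sq₀ (norm_nonneg _) (norm_nonneg _)).mp (by linarith)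

end Matrix

def IsOrthonormalFamily {ι n : Type*} [Fintype n] [DecidableEq ι] (μ : ι → n → ℂ) : Prop :=
  ∀ i j, star (μ i) ⬝ᵥ μ j = if i = j then 1 else 0

namespace IsOrthonormalFamily

variable {ι κ n m : Type*} [Fintype n] [DecidableEq ι] [DecidableEq κ]

theorem ne_zero {μ : ι → n → ℂ} (hμ : IsOrthonormalFamily μ) (i : ι) : μ i ≠ 0 := by
  intro h0
  simpa [h0] using hμ i i

theorem kron [Fintype m] {μ : ι → n → ℂ} {ν : κ → m → ℂ} (hμ : IsOrthonormalFamily μ)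
    (hν : IsOrthonormalFamily ν) :
    IsOrthonormalFamily fun p : ι × κ => Matrix.kronVec (μ p.1) (ν p.2) := by
  rintro ⟨i, k⟩ ⟨j, l⟩
  rw [star_kronVec, kronVec_dotProduct_kronVec, hμ, hν]
  simp only [Prod.mk.injEq, ite_zero_mul_ite_zero, mul_one]

theorem smul {μ : ι → n → ℂ} (hμ : IsOrthonormalFamily μ) {w : ι → ℂ} (hw : ∀ i, ‖w i‖ = 1) :
    IsOrthonormalFamily fun i => w i • μ i := by
  intro i j
  rw [star_smul, smul_dotProduct, dotProduct_smul, hμ]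
  split_ifs with hij
  · subst hij
    rw [smul_smul, smul_eq_mul, mul_one, Complex.star_def, RCLike.conj_mul, hw]
    norm_num
  · simp

variable [DecidableEq n] {μ ν : n → n → ℂ}

-- `(of μ)ᵀ` is the matrix whose columns are the vectors `μ i`.
theorem transpose_of_mem_unitaryGroup (hμ : IsOrthonormalFamily μ) :
    (of μ)ᵀ ∈ unitaryGroup n ℂ := by
  rw [mem_unitaryGroup_iff']
  ext i j
  simpa [mul_apply, one_apply, dotProduct] using hμ i j

theorem conjTranspose_transpose_of_mulVec (hμ : IsOrthonormalFamily μ) (j : n) :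
    (of μ)ᵀᴴ *ᵥ μ j = Pi.single j 1 := by
  ext i
  simpa [mulVec, dotProduct, Pi.single_apply] using hμ i j

theorem ext_of_mulVec (hμ : IsOrthonormalFamily μ) {A B : Matrix m n ℂ}
    (h : ∀ i, A *ᵥ μ i = B *ᵥ μ i) : A = B := by
  have hU := hμ.transpose_of_mem_unitaryGroup
  have hAB : A * (of μ)ᵀ = B * (of μ)ᵀ := by
    ext p i
    simpa [mul_apply, mulVec, dotProduct] using congrFun (h i) p
  simpa [Matrix.mul_assoc, Unitary.mul_star_self_of_mem hU] using congrArg (· * star (of μ)ᵀ) hAB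

theorem exists_mem_unitaryGroup_mulVec_eq (hμ : IsOrthonormalFamily μ)
    (hν : IsOrthonormalFamily ν) : ∃ V ∈ unitaryGroup n ℂ, ∀ i, V *ᵥ μ i = ν i := by
  refine ⟨(of ν)ᵀ * (of μ)ᵀᴴ, mul_mem hν.transpose_of_mem_unitaryGroup
    (Unitary.star_mem hμ.transpose_of_mem_unitaryGroup), fun i => ?_⟩
  rw [← mulVec_mulVec, hμ.conjTranspose_transpose_of_mulVec, mulVec_single_one]
  rfl

theorem norm_star_dotProduct_zero_eq_one {μ ν : Fin 2 → Fin 2 → ℂ} (hμ : IsOrthonormalFamily μ)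
    (hν : IsOrthonormalFamily ν) : ‖star (μ 0) ⬝ᵥ ν 0‖ = ‖star (μ 1) ⬝ᵥ ν 1‖ :=
  norm_apply_zero_zero_eq_of_mem_unitaryGroup
    (mul_mem (Unitary.star_mem hμ.transpose_of_mem_unitaryGroup) hν.transpose_of_mem_unitaryGroup)

theorem outer_mulVec {μ : ι → Fin 2 → ℂ} (hμ : IsOrthonormalFamily μ) (k i : ι) :
    outer (μ k) *ᵥ μ i = if k = i then μ i else 0 := by
  rw [outer, vecMulVec_mulVec, hμ, op_smul_eq_smul]
  split_ifs with h
  · rw [h, one_smul]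
  · rw [zero_smul]

end IsOrthonormalFamily

theorem Complex.exists_exp_mul_I_mul_eq_norm (z : ℂ) : ∃ θ : ℝ, exp (θ * I) * z = ‖z‖ := by
  refine ⟨-arg z, ?_⟩
  conv_lhs => rw [← norm_mul_exp_arg_mul_I z, mul_left_comm, ← Complex.exp_add]
  simp

theorem Matrix.exists_mulVec_eq_exp_smul_of_mul_vecMulVec_star_mul_conjTranspose {m n : Type*}
    [Fintype m] [Fintype n] {G : Matrix m n ℂ} {v : n → ℂ} {t : m → ℂ} (ht : t ≠ 0)
    (h : G * vecMulVec v (star v) * Gᴴ = vecMulVec t (star t)) :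
    ∃ θ : ℝ, G *ᵥ v = Complex.exp (θ * Complex.I) • t := by
  rw [mul_vecMulVec_star_mul_conjTranspose] at h
  obtain ⟨z, hz, hGv⟩ := exists_norm_eq_one_smul_of_vecMulVec_star_eq ht h
  obtain ⟨θ, rfl⟩ := (Complex.norm_eq_one_iff z).mp hz
  exact ⟨θ, hGv⟩

theorem outer_kronecker_outer (a b : Fin 2 → ℂ) :
    outer a ⊗ₖ outer b = vecMulVec (kronVec a b) (star (kronVec a b)) := by
  rw [outer, outer, vecMulVec_kronecker_vecMulVec, star_kronVec]

theorem swapM2_mulVec_kronVec (a b : Fin 2 → ℂ) : swapM2 *ᵥ kronVec a b = kronVec b a := by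
  ext ⟨i, j⟩
  fin_cases i <;> fin_cases j <;>
    simp [swapM2, mulVec, dotProduct, kronVec, Fintype.sum_prod_type] <;> ring

def phaseGate (μ : Fin 2 → Fin 2 → ℂ) (φ₀ φ₁ : ℂ) : Matrix (Fin 2 × Fin 2) (Fin 2 × Fin 2) ℂ :=
  φ₀ • (outer (μ 0) ⊗ₖ outer (μ 0)) + outer (μ 0) ⊗ₖ outer (μ 1) + outer (μ 1) ⊗ₖ outer (μ 0) +
    φ₁ • (outer (μ 1) ⊗ₖ outer (μ 1))

theorem IsOrthonormalFamily.phaseGate_mulVec_kronVec {μ : Fin 2 → Fin 2 → ℂ}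
    (hμ : IsOrthonormalFamily μ) (φ₀ φ₁ : ℂ) (i j : Fin 2) :
    phaseGate μ φ₀ φ₁ *ᵥ kronVec (μ i) (μ j) = !![φ₀, 1; 1, φ₁] i j • kronVec (μ i) (μ j) := by
  simp only [phaseGate, add_mulVec, smul_mulVec, kronecker_mulVec_kronVec, hμ.outer_mulVec]
  fin_cases i <;> fin_cases j <;> simp

theorem statement11_general (G : Matrix (Fin 2 × Fin 2) (Fin 2 × Fin 2) ℂ)
    (hGS : G * swapM2 = swapM2 * G)
    (μ μt : Fin 2 → (Fin 2 → ℂ))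
    (hμ : ∀ i j, dotProduct (star (μ i)) (μ j) = if i = j then 1 else 0)
    (hμt : ∀ i j, dotProduct (star (μt i)) (μt j) = if i = j then 1 else 0)
    (h : ∀ i j, G * (outer (μ i) ⊗ₖ outer (μ j)) * Gᴴ = outer (μt i) ⊗ₖ outer (μt j)) :
    ∃ (V : Matrix (Fin 2) (Fin 2) ℂ) (θ00 θ11 : ℝ) (c : ℂ),
      V ∈ Matrix.unitaryGroup (Fin 2) ℂ ∧ ‖c‖ = 1 ∧
      G = c • ((V ⊗ₖ V) *
        (Complex.exp (Complex.I * (θ00 : ℂ)) • (outer (μ 0) ⊗ₖ outer (μ 0)) +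
          outer (μ 0) ⊗ₖ outer (μ 1) + outer (μ 1) ⊗ₖ outer (μ 0) +
          Complex.exp (Complex.I * (θ11 : ℂ)) • (outer (μ 1) ⊗ₖ outer (μ 1)))) ∧
      (∀ i, ∃ z : ℂ, V.mulVec (μ i) = z • μt i) ∧
      (∃ rr : ℝ, 0 ≤ rr ∧
        dotProduct (star (μ 0)) (V.mulVec (μ 0)) = (rr : ℂ) ∧
        dotProduct (star (μ 1)) (V.mulVec (μ 1)) = (rr : ℂ)) := by
  replace hμ : IsOrthonormalFamily μ := hμ
  replace hμt : IsOrthonormalFamily μt := hμt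
  choose α hα using fun i j => exists_mulVec_eq_exp_smul_of_mul_vecMulVec_star_mul_conjTranspose
    (kronVec_ne_zero (hμt.ne_zero i) (hμt.ne_zero j))
    (by simpa only [outer_kronecker_outer] using h i j)
  have hα_symm : Complex.exp (α 1 0 * Complex.I) = Complex.exp (α 0 1 * Complex.I) := by
    have h10 := hα 1 0
    rw [← swapM2_mulVec_kronVec, mulVec_mulVec, hGS, ← mulVec_mulVec, hα 0 1, mulVec_smul,
      swapM2_mulVec_kronVec] at h10
    exact smul_left_injective ℂ (kronVec_ne_zero (hμt.ne_zero 1) (hμt.ne_zero 0)) h10.symm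
  choose β hβ using fun i => Complex.exists_exp_mul_I_mul_eq_norm (star (μ i) ⬝ᵥ μt i)
  obtain ⟨V, hV, hVμ⟩ := hμ.exists_mem_unitaryGroup_mulVec_eq
    (hμt.smul fun i => Complex.norm_exp_ofReal_mul_I (β i))
  refine ⟨V, α 0 0 - α 0 1 - β 0 + β 1, α 1 1 - α 0 1 + β 0 - β 1,
    Complex.exp ((α 0 1 - β 0 - β 1 : ℝ) * Complex.I), hV, Complex.norm_exp_ofReal_mul_I _, ?_,
    fun i => ⟨_, hVμ i⟩, ‖star (μ 0) ⬝ᵥ μt 0‖, norm_nonneg _, ?_, ?_⟩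
  · change G = _ • (_ * phaseGate μ _ _)
    refine (hμ.kron hμ).ext_of_mulVec fun ⟨i, j⟩ => ?_
    rw [smul_mulVec, ← mulVec_mulVec, hμ.phaseGate_mulVec_kronVec, mulVec_smul,
      kronecker_mulVec_kronVec, hVμ, hVμ, kronVec_smul_kronVec, smul_smul, smul_smul, hα]
    congr 1
    fin_cases i <;> fin_cases j <;> simp [← Complex.exp_add, hα_symm] <;> congr 1 <;> ring
  · rw [hVμ, dotProduct_smul, smul_eq_mul, hβ]
  · rw [hVμ, dotProduct_smul, smul_eq_mul, hβ, hμ.norm_star_dotProduct_zero_eq_one hμt]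

/-- a swap-symmetric unitary `G` on `ℂ² ⊗ ℂ²` conjugating one product-projector
orthonormal basis to another factorises, up to a global phase, as `G = c (V ⊗ V) F` with
`F = e^{iθ₀₀}|μ₀⟩⟨μ₀|⊗|μ₀⟩⟨μ₀| + |μ₀⟩⟨μ₀|⊗|μ₁⟩⟨μ₁| + |μ₁⟩⟨μ₁|⊗|μ₀⟩⟨μ₀| + e^{iθ₁₁}|μ₁⟩⟨μ₁|⊗|μ₁⟩⟨μ₁|`,
`V|μ_i⟩ ∝ |μ̃_i⟩`, and the matrix of `V` in `{|μ₀⟩, |μ₁⟩}` has equal, real, nonnegative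
diagonal entries. -/
theorem statement11 (G : Matrix (Fin 2 × Fin 2) (Fin 2 × Fin 2) ℂ)
    (hG : G ∈ Matrix.unitaryGroup (Fin 2 × Fin 2) ℂ)
    (hGS : G * swapM2 = swapM2 * G)
    (μ μt : Fin 2 → (Fin 2 → ℂ))
    (hμ : ∀ i j, dotProduct (star (μ i)) (μ j) = if i = j then 1 else 0)
    (hμt : ∀ i j, dotProduct (star (μt i)) (μt j) = if i = j then 1 else 0)
    (h : ∀ i j, G * (outer (μ i) ⊗ₖ outer (μ j)) * Gᴴ = outer (μt i) ⊗ₖ outer (μt j)) :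
    ∃ (V : Matrix (Fin 2) (Fin 2) ℂ) (θ00 θ11 : ℝ) (c : ℂ),
      V ∈ Matrix.unitaryGroup (Fin 2) ℂ ∧ ‖c‖ = 1 ∧
      G = c • ((V ⊗ₖ V) *
        (Complex.exp (Complex.I * (θ00 : ℂ)) • (outer (μ 0) ⊗ₖ outer (μ 0)) +
          outer (μ 0) ⊗ₖ outer (μ 1) + outer (μ 1) ⊗ₖ outer (μ 0) +
          Complex.exp (Complex.I * (θ11 : ℂ)) • (outer (μ 1) ⊗ₖ outer (μ 1)))) ∧
      (∀ i, ∃ z : ℂ, V.mulVec (μ i) = z • μt i) ∧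
      (∃ rr : ℝ, 0 ≤ rr ∧
        dotProduct (star (μ 0)) (V.mulVec (μ 0)) = (rr : ℂ) ∧
        dotProduct (star (μ 1)) (V.mulVec (μ 1)) = (rr : ℂ)) :=
  statement11_general G hGS μ μt hμ hμt h

end
end

section
/- Let φ, θ₀₀, θ₁₁, α₁, α₂, γ ∈ ℝ, let a ≥ 0 be real and b ∈ ℂ with a² + |b|² = 1. Define the unitaries V := [[a, b], [−conj(b), a]] and U := e^{iα₁σ_z} e^{iγσ_y} e^{iα₂σ_z} on ℂ², and let F be the operator on ℂ² ⊗ ℂ² diagonal in the computational basis with diagonal (e^{iθ₀₀}, 1, 1, e^{iθ₁₁}). If (V ⊗ V) F = C_φ (U ⊗ U) C_φ, then e^{i(θ₀₀+θ₁₁)} = e^{2iφ}, and, letting s ∈ {+1, −1} be such that e^{i(θ₀₀+θ₁₁)/2} = s e^{iφ}, and setting δ := (θ₀₀ − θ₁₁)/2 and χ := 2(α₁ + α₂) − φ, one has a²(1 + cos φ cos δ) = cos²γ (1 + s cos φ cos χ) and a² sin φ cos δ = s cos²γ sin φ cos χ. -/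
/-!
Taking determinants, `det V = det U = 1` leaves `det F = (det C_φ)²`, which is the first claim.
Comparing the diagonal entries at `|00⟩`, `|11⟩` and `|01⟩` gives `a² e^{iθ₀₀} = U₀₀²`,
`a² e^{iθ₁₁} = e^{2iφ} U₁₁²` and `a² = U₀₀ U₁₁`, where `U₀₀ = e^{i(α₁+α₂)} cos γ` and
`U₁₁ = e^{-i(α₁+α₂)} cos γ`. Adding the first two and factoring out
`e^{i(θ₀₀+θ₁₁)/2} = s e^{iφ}` on the left and `e^{iφ}` on the right gives
`s a² cos δ = cos² γ cos χ`; with `a² = cos² γ` and `s² = 1` both identities follow.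
-/

open Kronecker Matrix

noncomputable section

/-- The Pauli matrix σ_y. -/
def sigmaY : Matrix (Fin 2) (Fin 2) ℂ := !![0, -Complex.I; Complex.I, 0]

/-- The Pauli matrix σ_z. -/
def sigmaZ : Matrix (Fin 2) (Fin 2) ℂ := !![1, 0; 0, -1]

open Complex

theorem exp_smul_sigmaZ (α : ℝ) :
    NormedSpace.exp ((I * α) • sigmaZ) = diagonal ![exp (I * α), exp (-(I * α))] := by
  have hdiag : (I * (α : ℂ)) • sigmaZ = diagonal ![I * α, -(I * α)] := by
    ext i j; fin_cases i <;> fin_cases j <;> simp [sigmaZ]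
  rw [hdiag, exp_diagonal]
  congr 1; ext i; fin_cases i <;> simp [← Complex.exp_eq_exp_ℂ]

theorem exp_smul_sigmaY (γ : ℝ) :
    NormedSpace.exp ((I * γ) • sigmaY) = !![cos γ, sin γ; -sin γ, cos γ] := by
  set P : Matrix (Fin 2) (Fin 2) ℂ := !![1, 1; I, -I]
  set Q : Matrix (Fin 2) (Fin 2) ℂ := !![1 / 2, -I / 2; 1 / 2, I / 2]
  have hPQ : P * Q = 1 := by
    ext i j; fin_cases i <;> fin_cases j <;> simp [P, Q, Matrix.mul_apply] <;> grind [I_mul_I]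
  have hinv : P⁻¹ = Q := inv_eq_right_inv hPQ
  have hconj : (I * (γ : ℂ)) • sigmaY = P * ((I * γ) • sigmaZ) * P⁻¹ := by
    rw [hinv, Matrix.mul_smul, Matrix.smul_mul]
    congr 1
    ext i j; fin_cases i <;> fin_cases j <;>
      simp [P, Q, sigmaY, sigmaZ, Matrix.mul_apply] <;> ring_nf
  rw [hconj, Matrix.exp_conj _ _ (IsUnit.of_mul_eq_one _ hPQ), exp_smul_sigmaZ, hinv]
  ext i j; fin_cases i <;> fin_cases j <;>
    simp [P, Q, Matrix.mul_apply, vecMul_diagonal, cos, sin, mul_comm _ I] <;> grind [I_mul_I]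

theorem exp_sigmaZ_mul_exp_sigmaY_mul_exp_sigmaZ (α₁ γ α₂ : ℝ) :
    NormedSpace.exp ((I * α₁) • sigmaZ) * NormedSpace.exp ((I * γ) • sigmaY) *
        NormedSpace.exp ((I * α₂) • sigmaZ) =
      !![exp (I * (α₁ + α₂)) * cos γ, exp (I * (α₁ - α₂)) * sin γ;
        -(exp (-(I * (α₁ - α₂))) * sin γ), exp (-(I * (α₁ + α₂))) * cos γ] := by
  rw [exp_smul_sigmaZ, exp_smul_sigmaY, exp_smul_sigmaZ]
  ext i j; fin_cases i <;> fin_cases j <;>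
    simp [Matrix.mul_apply, mul_add, mul_sub, exp_add, exp_sub, exp_neg] <;> ring

theorem det_exp_sigmaZ_mul_exp_sigmaY_mul_exp_sigmaZ (α₁ γ α₂ : ℝ) :
    (NormedSpace.exp ((I * α₁) • sigmaZ) * NormedSpace.exp ((I * γ) • sigmaY) *
        NormedSpace.exp ((I * α₂) • sigmaZ)).det = 1 := by
  rw [exp_sigmaZ_mul_exp_sigmaY_mul_exp_sigmaZ, det_fin_two_of]
  calc _ = (exp (I * (α₁ + α₂)) * exp (-(I * (α₁ + α₂)))) * cos γ ^ 2
        + (exp (I * (α₁ - α₂)) * exp (-(I * (α₁ - α₂)))) * sin γ ^ 2 := by ring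
    _ = 1 := by simp only [← exp_add, add_neg_cancel, exp_zero, one_mul, cos_sq_add_sin_sq]

theorem det_su2_matrix (a : ℝ) (b : ℂ) :
    (!![(a : ℂ), b; -(starRingEnd ℂ) b, (a : ℂ)]).det = ((a ^ 2 + ‖b‖ ^ 2 : ℝ) : ℂ) := by
  rw [det_fin_two_of, mul_neg, sub_neg_eq_add, mul_conj, ← Complex.sq_norm]
  push_cast; ring

theorem det_diagonal_fin_two_prod {R : Type*} [CommRing R] (d : Fin 2 × Fin 2 → R) :
    (diagonal d).det = d (0, 0) * d (0, 1) * (d (1, 0) * d (1, 1)) := by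
  simp [det_diagonal, Fintype.prod_prod_type, Fin.prod_univ_two]

theorem det_Cphase (φ : ℝ) : (Cphase φ).det = exp (I * φ) := by
  rw [Cphase, det_diagonal_fin_two_prod]; simp

theorem apply_self_of_kronecker_mul_diagonal_eq {n R : Type*} [Fintype n] [DecidableEq n]
    [CommRing R]
    {A₁ A₂ B₁ B₂ : Matrix n n R} {d c : n × n → R}
    (h : (A₁ ⊗ₖ A₂) * diagonal d = diagonal c * (B₁ ⊗ₖ B₂) * diagonal c) (i j : n) :
    A₁ i i * A₂ j j * d (i, j) = c (i, j) ^ 2 * (B₁ i i * B₂ j j) := by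
  have := congrFun (congrFun h (i, j)) (i, j)
  simp only [mul_diagonal, diagonal_mul, kroneckerMap_apply] at this
  linear_combination this

theorem sign_mul_cos_eq_of_phases {r c θ₀ θ₁ β φ s : ℝ}
    (h₀ : (r : ℂ) * exp (I * θ₀) = c * exp (I * β) ^ 2)
    (h₁ : (r : ℂ) * exp (I * θ₁) = c * (exp (I * φ) * exp (-(I * β))) ^ 2)
    (hs : exp (I * (((θ₀ : ℂ) + θ₁) / 2)) = s * exp (I * φ)) :
    s * r * Real.cos ((θ₀ - θ₁) / 2) = c * Real.cos (2 * β - φ) := by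
  set δ : ℝ := (θ₀ - θ₁) / 2
  set χ : ℝ := 2 * β - φ
  have e₀ : exp (I * θ₀) = exp (I * (((θ₀ : ℂ) + θ₁) / 2)) * exp (δ * I) := by
    rw [← exp_add]; push_cast [δ]; ring_nf
  have e₁ : exp (I * θ₁) = exp (I * (((θ₀ : ℂ) + θ₁) / 2)) * exp (-δ * I) := by
    rw [← exp_add]; push_cast [δ]; ring_nf
  have f₀ : exp (I * β) ^ 2 = exp (I * φ) * exp (χ * I) := by
    rw [sq, ← exp_add, ← exp_add]; push_cast [χ]; ring_nf
  have f₁ : (exp (I * φ) * exp (-(I * β))) ^ 2 = exp (I * φ) * exp (-χ * I) := by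
    rw [sq, ← exp_add, ← exp_add, ← exp_add]; push_cast [χ]; ring_nf
  rw [e₀, hs, f₀] at h₀
  rw [e₁, hs, f₁] at h₁
  have hsum : exp (I * φ) * (s * r * (2 * cos δ)) = exp (I * φ) * (c * (2 * cos χ)) := by
    rw [two_cos, two_cos]; linear_combination h₀ + h₁
  have := mul_left_cancel₀ (exp_ne_zero _) hsum
  exact_mod_cast (by linear_combination this / 2 : (s * r * cos δ : ℂ) = c * cos χ)

theorem diagonal_relations_of_gate_eq {a φ θ00 θ11 β γ : ℝ}
    {V U : Matrix (Fin 2) (Fin 2) ℂ} (hV00 : V 0 0 = a) (hV11 : V 1 1 = a)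
    (hU00 : U 0 0 = exp (I * β) * cos γ) (hU11 : U 1 1 = exp (-(I * β)) * cos γ)
    (h : (V ⊗ₖ V) * diagonal (fun p =>
        if p = (0, 0) then exp (I * θ00) else if p = (1, 1) then exp (I * θ11) else 1) =
      Cphase φ * (U ⊗ₖ U) * Cphase φ) :
    a ^ 2 = Real.cos γ ^ 2 ∧
    ((a ^ 2 : ℝ) : ℂ) * exp (I * θ00) = ((Real.cos γ ^ 2 : ℝ) : ℂ) * exp (I * β) ^ 2 ∧
    ((a ^ 2 : ℝ) : ℂ) * exp (I * θ11) =
      ((Real.cos γ ^ 2 : ℝ) : ℂ) * (exp (I * φ) * exp (-(I * β))) ^ 2 := by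
  have E := apply_self_of_kronecker_mul_diagonal_eq h
  have E00 := E 0 0
  have E11 := E 1 1
  have E01 := E 0 1
  simp only [Fin.isValue, hV00, hV11, hU00, hU11, ↓reduceIte, Fin.coe_ofNat_eq_mod, Nat.zero_mod,
    CharP.cast_eq_zero, mul_zero, exp_zero, one_pow, one_mul, Prod.mk.injEq, one_ne_zero, and_self,
    Nat.mod_succ, Nat.cast_one, mul_one, and_false, zero_ne_one, and_true] at E00 E11 E01
  have hu : exp (I * β) * exp (-(I * β)) = 1 := by rw [← exp_add, add_neg_cancel, exp_zero]
  refine ⟨?_, by push_cast; linear_combination E00, by push_cast; linear_combination E11⟩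
  exact_mod_cast (by push_cast; linear_combination E01 + cos γ ^ 2 * hu :
    ((a ^ 2 : ℝ) : ℂ) = ((Real.cos γ ^ 2 : ℝ) : ℂ))

theorem statement12_general (φ θ00 θ11 α₁ α₂ γ : ℝ) (a : ℝ) (b : ℂ)
    (hab : a ^ 2 + ‖b‖ ^ 2 = 1)
    (V : Matrix (Fin 2) (Fin 2) ℂ) (hV : V = !![(a : ℂ), b; -(starRingEnd ℂ) b, (a : ℂ)])
    (U : Matrix (Fin 2) (Fin 2) ℂ)
    (hU : U = NormedSpace.exp ((Complex.I * (α₁ : ℂ)) • sigmaZ) *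
              NormedSpace.exp ((Complex.I * (γ : ℂ)) • sigmaY) *
              NormedSpace.exp ((Complex.I * (α₂ : ℂ)) • sigmaZ))
    (F : Matrix (Fin 2 × Fin 2) (Fin 2 × Fin 2) ℂ)
    (hF : F = Matrix.diagonal fun p =>
      if p = ((0 : Fin 2), (0 : Fin 2)) then Complex.exp (Complex.I * (θ00 : ℂ))
      else if p = ((1 : Fin 2), (1 : Fin 2)) then Complex.exp (Complex.I * (θ11 : ℂ)) else 1)
    (h : (V ⊗ₖ V) * F = Cphase φ * (U ⊗ₖ U) * Cphase φ) :
    Complex.exp (Complex.I * ((θ00 : ℂ) + (θ11 : ℂ))) = Complex.exp (2 * Complex.I * (φ : ℂ)) ∧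
    ∀ s : ℝ, (s = 1 ∨ s = -1) →
      Complex.exp (Complex.I * (((θ00 : ℂ) + (θ11 : ℂ)) / 2)) = (s : ℂ) * Complex.exp (Complex.I * (φ : ℂ)) →
      (a ^ 2 * (1 + Real.cos φ * Real.cos ((θ00 - θ11) / 2)) =
        Real.cos γ ^ 2 * (1 + s * Real.cos φ * Real.cos (2 * (α₁ + α₂) - φ)) ∧
       a ^ 2 * Real.sin φ * Real.cos ((θ00 - θ11) / 2) =
        s * Real.cos γ ^ 2 * Real.sin φ * Real.cos (2 * (α₁ + α₂) - φ)) := by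
  have hUdet : U.det = 1 := hU ▸ det_exp_sigmaZ_mul_exp_sigmaY_mul_exp_sigmaZ α₁ γ α₂
  have hVdet : V.det = 1 := by rw [hV, det_su2_matrix, hab]; simp
  have hFdet : F.det = exp (I * (θ00 + θ11)) := by
    rw [hF, det_diagonal_fin_two_prod]; simp [← exp_add, mul_add]
  have hdet := congrArg det h
  simp only [det_mul, det_kronecker, hVdet, hUdet, hFdet, det_Cphase, one_pow, one_mul,
    mul_one] at hdet
  refine ⟨by rw [hdet, ← exp_add]; ring_nf, fun s hs hsq => ?_⟩
  have hU' := hU.trans (exp_sigmaZ_mul_exp_sigmaY_mul_exp_sigmaZ α₁ γ α₂)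
  obtain ⟨ha2, h₀, h₁⟩ := diagonal_relations_of_gate_eq (a := a) (β := α₁ + α₂) (γ := γ)
    (by simp [hV]) (by simp [hV]) (by simp [hU']) (by simp [hU']) (hF ▸ h)
  have hcos := sign_mul_cos_eq_of_phases h₀ h₁ hsq
  have hs2 : s ^ 2 = 1 := by rcases hs with rfl | rfl <;> norm_num
  constructor
  · linear_combination ha2 - a ^ 2 * Real.cos φ * Real.cos ((θ00 - θ11) / 2) * hs2
      + s * Real.cos φ * hcos
  · linear_combination -a ^ 2 * Real.sin φ * Real.cos ((θ00 - θ11) / 2) * hs2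
      + s * Real.sin φ * hcos

/-- determinant and trace constraints relating the two factorisations
`(V ⊗ V) F = C_φ (U ⊗ U) C_φ` of the gate `G`. -/
theorem statement12 (φ θ00 θ11 α₁ α₂ γ : ℝ) (a : ℝ) (ha : 0 ≤ a) (b : ℂ)
    (hab : a ^ 2 + ‖b‖ ^ 2 = 1)
    (V : Matrix (Fin 2) (Fin 2) ℂ) (hV : V = !![(a : ℂ), b; -(starRingEnd ℂ) b, (a : ℂ)])
    (U : Matrix (Fin 2) (Fin 2) ℂ)
    (hU : U = NormedSpace.exp ((Complex.I * (α₁ : ℂ)) • sigmaZ) *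
              NormedSpace.exp ((Complex.I * (γ : ℂ)) • sigmaY) *
              NormedSpace.exp ((Complex.I * (α₂ : ℂ)) • sigmaZ))
    (F : Matrix (Fin 2 × Fin 2) (Fin 2 × Fin 2) ℂ)
    (hF : F = Matrix.diagonal fun p =>
      if p = ((0 : Fin 2), (0 : Fin 2)) then Complex.exp (Complex.I * (θ00 : ℂ))
      else if p = ((1 : Fin 2), (1 : Fin 2)) then Complex.exp (Complex.I * (θ11 : ℂ)) else 1)
    (h : (V ⊗ₖ V) * F = Cphase φ * (U ⊗ₖ U) * Cphase φ) :
    Complex.exp (Complex.I * ((θ00 : ℂ) + (θ11 : ℂ))) = Complex.exp (2 * Complex.I * (φ : ℂ)) ∧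
    ∀ s : ℝ, (s = 1 ∨ s = -1) →
      Complex.exp (Complex.I * (((θ00 : ℂ) + (θ11 : ℂ)) / 2)) = (s : ℂ) * Complex.exp (Complex.I * (φ : ℂ)) →
      (a ^ 2 * (1 + Real.cos φ * Real.cos ((θ00 - θ11) / 2)) =
        Real.cos γ ^ 2 * (1 + s * Real.cos φ * Real.cos (2 * (α₁ + α₂) - φ)) ∧
       a ^ 2 * Real.sin φ * Real.cos ((θ00 - θ11) / 2) =
        s * Real.cos γ ^ 2 * Real.sin φ * Real.cos (2 * (α₁ + α₂) - φ)) :=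
  statement12_general φ θ00 θ11 α₁ α₂ γ a b hab V hV U hU F hF h
end
end

section
/- Let φ, θ₀₀, θ₁₁, α₁, α₂, γ ∈ ℝ, let a ≥ 0 be real and b ∈ ℂ with a² + |b|² = 1, define V := [[a, b], [−conj(b), a]] and U := e^{iα₁σ_z} e^{iγσ_y} e^{iα₂σ_z}, and let F be the operator on ℂ² ⊗ ℂ² diagonal in the computational basis with diagonal (e^{iθ₀₀}, 1, 1, e^{iθ₁₁}). Suppose (V ⊗ V) F = C_φ (U ⊗ U) C_φ and sin φ ≠ 0. Then a² = cos²γ, and moreover either a = 0 or cos δ = s cos χ, where δ := (θ₀₀ − θ₁₁)/2, χ := 2(α₁ + α₂) − φ, and s ∈ {+1, −1} is such that e^{i(θ₀₀+θ₁₁)/2} = s e^{iφ}. -/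
open Kronecker Matrix

noncomputable section

/-! Only two diagonal entries of the gate identity are needed. The entry at `|01⟩` gives
`a² = U₀₀ U₁₁ = cos² γ`, the entry at `|00⟩` gives `a² e^{iθ₀₀} = U₀₀² = e^{2i(α₁+α₂)} cos² γ`;
so for `a ≠ 0`, `e^{iθ₀₀} = e^{2i(α₁+α₂)}`. Dividing by `e^{i(θ₀₀+θ₁₁)/2} = s e^{iφ}` gives
`e^{iδ} = s e^{iχ}`, whose real part is the claim. -/

open Complex

theorem exp_smul_sigmaZ_s13 (c : ℂ) :
    NormedSpace.exp (c • sigmaZ) = !![exp c, 0; 0, exp (-c)] := by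
  have hdiag : c • sigmaZ = diagonal ![c, -c] := by simp [sigmaZ, diagonal_vec2]
  rw [hdiag, exp_diagonal, diagonal_fin_two]
  simp [← exp_eq_exp_ℂ]

theorem exp_I_smul_sigmaY (c : ℂ) :
    NormedSpace.exp ((I * c) • sigmaY) = !![cos c, sin c; -sin c, cos c] := by
  -- eigenvectors of `σ_y`, for the eigenvalues `1` and `-1`
  set P : Matrix (Fin 2) (Fin 2) ℂ := !![1, 1; I, -I]
  set Q : Matrix (Fin 2) (Fin 2) ℂ := !![1 / 2, -I / 2; 1 / 2, I / 2]
  have hPQ : P * Q = 1 := by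
    simp [P, Q, one_fin_two]
    ring_nf
    simp
  have hPinv : P⁻¹ = Q := inv_eq_right_inv hPQ
  have hP : IsUnit P := IsUnit.of_mul_eq_one Q hPQ
  have hconj : (I * c) • sigmaY = P * diagonal ![I * c, -(I * c)] * P⁻¹ := by
    rw [hPinv, diagonal_vec2]
    ext i j
    fin_cases i <;> fin_cases j <;> simp [P, Q, sigmaY, mul_apply] <;> ring_nf
  rw [hconj, exp_conj P _ hP, exp_diagonal, diagonal_fin_two, hPinv]
  simp [P, Q, cos, sin, ← exp_eq_exp_ℂ]
  ring_nf
  simp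
  ring

theorem euler_zyz_eq (α₁ γ α₂ : ℂ) :
    NormedSpace.exp ((I * α₁) • sigmaZ) * NormedSpace.exp ((I * γ) • sigmaY) *
        NormedSpace.exp ((I * α₂) • sigmaZ) =
      !![exp (I * α₁) * cos γ * exp (I * α₂), exp (I * α₁) * sin γ * exp (-(I * α₂));
        -(exp (-(I * α₁)) * sin γ * exp (I * α₂)), exp (-(I * α₁)) * cos γ * exp (-(I * α₂))] := by
  rw [exp_smul_sigmaZ_s13, exp_I_smul_sigmaY, exp_smul_sigmaZ_s13]
  ext i j
  fin_cases i <;> fin_cases j <;> simp [Matrix.mul_apply]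

theorem kronecker_mul_diagonal_apply_eq_of_eq_Cphase {V U : Matrix (Fin 2) (Fin 2) ℂ}
    {f : Fin 2 × Fin 2 → ℂ} {φ : ℝ} (h : (V ⊗ₖ V) * diagonal f = Cphase φ * (U ⊗ₖ U) * Cphase φ)
    (p : Fin 2 × Fin 2) :
    V p.1 p.1 * V p.2 p.2 * f p =
      exp (I * φ * p.1.val * p.2.val) ^ 2 * (U p.1 p.1 * U p.2 p.2) := by
  have := congrFun (congrFun h p) p
  simp only [Cphase, mul_diagonal, diagonal_mul, kroneckerMap_apply] at this
  linear_combination this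

theorem cos_half_sub_eq_mul_cos {θ₀₀ θ₁₁ ψ φ s : ℝ} (hs : s = 1 ∨ s = -1)
    (hθ : exp (I * θ₀₀) = exp (I * ψ))
    (hsum : exp (I * ((θ₀₀ + θ₁₁) / 2)) = s * exp (I * φ)) :
    Real.cos ((θ₀₀ - θ₁₁) / 2) = s * Real.cos (ψ - φ) := by
  have hss : (s : ℂ) * s = 1 := by rcases hs with rfl | rfl <;> norm_num
  have hsplit : exp (((θ₀₀ - θ₁₁) / 2 : ℝ) * I) * exp (I * ((θ₀₀ + θ₁₁) / 2)) =
      exp ((ψ - φ : ℝ) * I) * exp (I * φ) := by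
    rw [← exp_add, ← exp_add]
    convert hθ using 2 <;> push_cast <;> ring
  rw [hsum] at hsplit
  have hkey : exp (((θ₀₀ - θ₁₁) / 2 : ℝ) * I) = s * exp ((ψ - φ : ℝ) * I) :=
    mul_right_cancel₀ (exp_ne_zero (I * φ)) <| by
      linear_combination -exp (((θ₀₀ - θ₁₁) / 2 : ℝ) * I) * exp (I * φ) * hss + s * hsplit
  simpa only [exp_ofReal_mul_I_re, re_ofReal_mul] using congrArg re hkey

theorem statement13_general (φ θ00 θ11 α₁ α₂ γ : ℝ) (a : ℝ) (b : ℂ)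
    (V : Matrix (Fin 2) (Fin 2) ℂ) (hV : V = !![(a : ℂ), b; -(starRingEnd ℂ) b, (a : ℂ)])
    (U : Matrix (Fin 2) (Fin 2) ℂ)
    (hU : U = NormedSpace.exp ((Complex.I * (α₁ : ℂ)) • sigmaZ) *
              NormedSpace.exp ((Complex.I * (γ : ℂ)) • sigmaY) *
              NormedSpace.exp ((Complex.I * (α₂ : ℂ)) • sigmaZ))
    (F : Matrix (Fin 2 × Fin 2) (Fin 2 × Fin 2) ℂ)
    (hF : F = Matrix.diagonal fun p =>
      if p = ((0 : Fin 2), (0 : Fin 2)) then Complex.exp (Complex.I * (θ00 : ℂ))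
      else if p = ((1 : Fin 2), (1 : Fin 2)) then Complex.exp (Complex.I * (θ11 : ℂ)) else 1)
    (h : (V ⊗ₖ V) * F = Cphase φ * (U ⊗ₖ U) * Cphase φ) :
    a ^ 2 = Real.cos γ ^ 2 ∧
    ∀ s : ℝ, (s = 1 ∨ s = -1) →
      Complex.exp (Complex.I * (((θ00 : ℂ) + (θ11 : ℂ)) / 2)) = (s : ℂ) * Complex.exp (Complex.I * (φ : ℂ)) →
      (a = 0 ∨ Real.cos ((θ00 - θ11) / 2) = s * Real.cos (2 * (α₁ + α₂) - φ)) := by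
  subst hV hF
  have h01 : (a : ℂ) * a = U 0 0 * U 1 1 := by
    simpa using kronecker_mul_diagonal_apply_eq_of_eq_Cphase h (0, 1)
  have h00 : (a : ℂ) * a * exp (I * θ00) = U 0 0 * U 0 0 := by
    simpa using kronecker_mul_diagonal_apply_eq_of_eq_Cphase h (0, 0)
  have hU00 : U 0 0 = exp (I * α₁) * cos γ * exp (I * α₂) := by simp [hU, euler_zyz_eq]
  have hU11 : U 1 1 = exp (-(I * α₁)) * cos γ * exp (-(I * α₂)) := by simp [hU, euler_zyz_eq]
  have ha_sq : (a : ℂ) ^ 2 = cos γ ^ 2 := by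
    rw [hU00, hU11, exp_neg, exp_neg] at h01
    field_simp at h01
    linear_combination h01
  refine ⟨by exact_mod_cast ha_sq, fun s hs hsum => ?_⟩
  rcases eq_or_ne a 0 with ha | ha
  · exact Or.inl ha
  refine Or.inr (cos_half_sub_eq_mul_cos hs ?_ hsum)
  have hU00_sq : U 0 0 * U 0 0 = exp (I * (2 * (α₁ + α₂) : ℝ)) * cos γ ^ 2 := by
    rw [hU00, show I * (2 * (α₁ + α₂) : ℝ) = I * α₁ + I * α₂ + (I * α₁ + I * α₂) by push_cast; ring,
      exp_add, exp_add]
    ring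
  refine mul_left_cancel₀ (pow_ne_zero 2 (ofReal_ne_zero.2 ha)) ?_
  linear_combination h00 + hU00_sq - exp (I * (2 * (α₁ + α₂) : ℝ)) * ha_sq

/-- refinement of the trace/determinant constraints for `sin φ ≠ 0`:
`a² = cos²γ`, and either `a = 0` or `cos δ = s cos χ`. -/
theorem statement13 (φ θ00 θ11 α₁ α₂ γ : ℝ) (a : ℝ) (ha : 0 ≤ a) (b : ℂ)
    (hab : a ^ 2 + ‖b‖ ^ 2 = 1)
    (V : Matrix (Fin 2) (Fin 2) ℂ) (hV : V = !![(a : ℂ), b; -(starRingEnd ℂ) b, (a : ℂ)])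
    (U : Matrix (Fin 2) (Fin 2) ℂ)
    (hU : U = NormedSpace.exp ((Complex.I * (α₁ : ℂ)) • sigmaZ) *
              NormedSpace.exp ((Complex.I * (γ : ℂ)) • sigmaY) *
              NormedSpace.exp ((Complex.I * (α₂ : ℂ)) • sigmaZ))
    (F : Matrix (Fin 2 × Fin 2) (Fin 2 × Fin 2) ℂ)
    (hF : F = Matrix.diagonal fun p =>
      if p = ((0 : Fin 2), (0 : Fin 2)) then Complex.exp (Complex.I * (θ00 : ℂ))
      else if p = ((1 : Fin 2), (1 : Fin 2)) then Complex.exp (Complex.I * (θ11 : ℂ)) else 1)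
    (h : (V ⊗ₖ V) * F = Cphase φ * (U ⊗ₖ U) * Cphase φ)
    (hφ : Real.sin φ ≠ 0) :
    a ^ 2 = Real.cos γ ^ 2 ∧
    ∀ s : ℝ, (s = 1 ∨ s = -1) →
      Complex.exp (Complex.I * (((θ00 : ℂ) + (θ11 : ℂ)) / 2)) = (s : ℂ) * Complex.exp (Complex.I * (φ : ℂ)) →
      (a = 0 ∨ Real.cos ((θ00 - θ11) / 2) = s * Real.cos (2 * (α₁ + α₂) - φ)) :=
  statement13_general φ θ00 θ11 α₁ α₂ γ a b V hV U hU F hF h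
end
end

section
/- Let V be a 2×2 special unitary matrix and let f₀, f₁ ∈ ℂ with |f₀| = |f₁| = 1. Let F be the operator on ℂ² ⊗ ℂ² diagonal in the computational basis with diagonal (f₀, 1, 1, f₁), let G := (V ⊗ V) F, and let P := I ⊗ |0⟩⟨0|. If G² P = P G², then either G = W ⊗ W for some unitary W on ℂ², or V is diagonal in the computational basis, or V is antidiagonal in the computational basis. -/
/-!
`P` is diagonal, so `G²P = PG²` says that the entries of `G²` between basis states whose second
qubits differ vanish. Write `V = [[a, b], [c, d]]` and `K = f₀a² + 2ad + f₁d²`; modulo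
`ad - bc = 1`, three of these entries are `b²f₁K`, `b(aK - a - f₁d)` and `bf₁(dK - f₀a - d)`.
If `b = 0`, unitarity forces `c = 0`. Otherwise `a = -f₁d` and `d = -f₀a`: either `a = d = 0`, or
`f₀f₁ = 1`, and then `F = D ⊗ D` for `D = diag(x, x̄)` with `x² = f₀`, so `G = VD ⊗ VD`.
-/

open Kronecker Matrix

theorem Matrix.apply_eq_zero_of_commute_one_kronecker_single {m n R : Type*} [Fintype m]
    [Fintype n] [DecidableEq m] [DecidableEq n] [Semiring R] {A : Matrix (m × n) (m × n) R}
    {j : n}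
    (h : A * ((1 : Matrix m m R) ⊗ₖ single j j 1) = ((1 : Matrix m m R) ⊗ₖ single j j 1) * A)
    (i k : m) {l : n} (hl : l ≠ j) : A (i, j) (k, l) = 0 := by
  rw [← diagonal_one, ← diagonal_single, diagonal_kronecker_diagonal] at h
  simpa [mul_diagonal, diagonal_mul, hl] using (congr_fun₂ h (i, j) (k, l)).symm

theorem Matrix.mul_diagonal_sq_apply {n R : Type*} [Fintype n] [DecidableEq n] [CommSemiring R]
    (M : Matrix n n R) (φ : n → R) (x y : n) :
    ((M * diagonal φ) ^ 2) x y = (∑ z, M x z * φ z * M z y) * φ y := by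
  rw [sq, Matrix.mul_assoc, mul_apply, Finset.sum_mul]
  simp only [diagonal_mul, mul_diagonal, mul_assoc]

theorem Matrix.diagonal_mem_unitaryGroup {n R : Type*} [Fintype n] [DecidableEq n] [CommRing R]
    [StarRing R] {v : n → R} (hv : ∀ i, v i ∈ unitary R) : diagonal v ∈ unitaryGroup n R := by
  rw [mem_unitaryGroup_iff, star_eq_conjTranspose, diagonal_conjTranspose, diagonal_mul_diagonal,
    ← diagonal_one]
  exact congrArg diagonal (funext fun i => Unitary.mul_star_self_of_mem (hv i))

theorem Matrix.apply_one_zero_eq_zero_of_mem_unitaryGroup {𝕜 : Type*} [RCLike 𝕜]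
    {V : Matrix (Fin 2) (Fin 2) 𝕜} (hV : V ∈ unitaryGroup (Fin 2) 𝕜) (hb : V 0 1 = 0) :
    V 1 0 = 0 := by
  have hrow := congr_fun₂ (mem_unitaryGroup_iff.mp hV) 0 0
  have hcol := congr_fun₂ (mem_unitaryGroup_iff'.mp hV) 0 0
  simp only [mul_apply, Fin.sum_univ_two, star_apply, hb, one_apply_eq, RCLike.star_def,
    RCLike.conj_mul, RCLike.mul_conj, norm_zero, RCLike.ofReal_zero, ne_eq, OfNat.ofNat_ne_zero,
    not_false_eq_true, zero_pow, add_zero] at hrow hcol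
  rw [hrow, add_eq_left] at hcol
  simpa using hcol

def phaseDiag (f₀ f₁ : ℂ) (p : Fin 2 × Fin 2) : ℂ :=
  if p = ((0 : Fin 2), (0 : Fin 2)) then f₀ else if p = ((1 : Fin 2), (1 : Fin 2)) then f₁ else 1

theorem phase_relations_of_sq_commute {V : Matrix (Fin 2) (Fin 2) ℂ} (hdet : V.det = 1)
    {f₀ f₁ : ℂ} (hf₁ : f₁ ≠ 0) (hb : V 0 1 ≠ 0)
    (hcomm : ((V ⊗ₖ V) * diagonal (phaseDiag f₀ f₁)) ^ 2 * (1 ⊗ₖ single 0 0 1) =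
      (1 ⊗ₖ single 0 0 1) * ((V ⊗ₖ V) * diagonal (phaseDiag f₀ f₁)) ^ 2) :
    V 0 0 + f₁ * V 1 1 = 0 ∧ f₀ * V 0 0 + V 1 1 = 0 := by
  have h₁ := apply_eq_zero_of_commute_one_kronecker_single hcomm 0 1 one_ne_zero
  have h₂ := apply_eq_zero_of_commute_one_kronecker_single hcomm 0 0 one_ne_zero
  have h₃ := apply_eq_zero_of_commute_one_kronecker_single hcomm 1 1 one_ne_zero
  simp only [mul_diagonal_sq_apply, Fintype.sum_prod_type, Fin.sum_univ_two, kronecker_apply,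
    phaseDiag, Prod.mk.injEq, one_ne_zero, zero_ne_one, and_self, and_false, false_and,
    if_true, if_false] at h₁ h₂ h₃
  rw [det_fin_two] at hdet
  set a := V 0 0
  set b := V 0 1
  set c := V 1 0
  set d := V 1 1
  have hK : f₀ * a ^ 2 + 2 * a * d + f₁ * d ^ 2 = 0 := by
    have : b ^ 2 * f₁ * (f₀ * a ^ 2 + 2 * a * d + f₁ * d ^ 2) = 0 := by linear_combination h₁
    simpa [hb, hf₁] using this
  constructor
  · have : b * (a + f₁ * d) = 0 := by
      linear_combination (a * b) * hK - h₂ - (b * (a + f₁ * d)) * hdet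
    exact (mul_eq_zero.mp this).resolve_left hb
  · have : b * f₁ * (f₀ * a + d) = 0 := by
      linear_combination (f₁ * d * b) * hK - h₃ - (f₁ * b * (f₀ * a + d)) * hdet
    simpa [hb, hf₁] using this

theorem exists_mem_unitaryGroup_kronecker_self_eq_phaseDiag {f₀ f₁ : ℂ} (hf₀ : ‖f₀‖ = 1)
    (hf : f₀ * f₁ = 1) : ∃ D ∈ unitaryGroup (Fin 2) ℂ, D ⊗ₖ D = diagonal (phaseDiag f₀ f₁) := by
  obtain ⟨x, rfl⟩ := IsAlgClosed.exists_pow_nat_eq f₀ two_pos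
  have hx : x ∈ unitary ℂ := by
    rw [norm_pow, pow_eq_one_iff_of_nonneg (norm_nonneg x) two_ne_zero] at hf₀
    rw [Unitary.mem_iff_star_mul_self, Complex.star_def, Complex.conj_mul', hf₀]
    norm_num
  have hf₁ : f₁ = star x ^ 2 := by
    rw [← star_pow]
    refine mul_left_cancel₀ (left_ne_zero_of_mul_eq_one hf) ?_
    rw [hf, Unitary.mul_star_self_of_mem (pow_mem hx 2)]
  refine ⟨diagonal ![x, star x], diagonal_mem_unitaryGroup ?_, ?_⟩
  · intro i
    fin_cases i
    exacts [hx, Unitary.star_mem hx]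
  · rw [diagonal_kronecker_diagonal]
    congr 1
    funext ⟨i, j⟩
    have hxx : x * starRingEnd ℂ x = 1 := Unitary.mul_star_self_of_mem hx
    fin_cases i <;> fin_cases j <;> simp [phaseDiag, hf₁, sq, hxx, mul_comm (starRingEnd ℂ x) x]

/-- if `G = (V ⊗ V) F` with `V` special unitary and `F` diagonal with diagonal
`(f₀, 1, 1, f₁)`, `|f₀| = |f₁| = 1`, and `G²` commutes with `P = I ⊗ |0⟩⟨0|`, then either
`G = W ⊗ W` for some unitary `W`, or `V` is diagonal, or `V` is antidiagonal. -/
theorem statement14 (V : Matrix (Fin 2) (Fin 2) ℂ)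
    (hV : V ∈ Matrix.unitaryGroup (Fin 2) ℂ) (hVdet : V.det = 1)
    (f₀ f₁ : ℂ) (hf₀ : ‖f₀‖ = 1) (hf₁ : ‖f₁‖ = 1)
    (F : Matrix (Fin 2 × Fin 2) (Fin 2 × Fin 2) ℂ)
    (hF : F = Matrix.diagonal fun p =>
      if p = ((0 : Fin 2), (0 : Fin 2)) then f₀
      else if p = ((1 : Fin 2), (1 : Fin 2)) then f₁ else 1)
    (G : Matrix (Fin 2 × Fin 2) (Fin 2 × Fin 2) ℂ) (hG : G = (V ⊗ₖ V) * F)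
    (P : Matrix (Fin 2 × Fin 2) (Fin 2 × Fin 2) ℂ)
    (hP : P = (1 : Matrix (Fin 2) (Fin 2) ℂ) ⊗ₖ Matrix.single (0 : Fin 2) (0 : Fin 2) (1 : ℂ))
    (hcomm : G ^ 2 * P = P * G ^ 2) :
    (∃ W ∈ Matrix.unitaryGroup (Fin 2) ℂ, G = W ⊗ₖ W) ∨
    (V 0 1 = 0 ∧ V 1 0 = 0) ∨
    (V 0 0 = 0 ∧ V 1 1 = 0) := by
  subst hF hG hP
  by_cases hb : V 0 1 = 0
  · exact Or.inr (Or.inl ⟨hb, apply_one_zero_eq_zero_of_mem_unitaryGroup hV hb⟩)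
  have hf₁ne : f₁ ≠ 0 := norm_ne_zero_iff.mp (hf₁ ▸ one_ne_zero)
  obtain ⟨hd, ha⟩ := phase_relations_of_sq_commute hVdet hf₁ne hb hcomm
  by_cases ha₀ : V 0 0 = 0
  · exact Or.inr (Or.inr ⟨ha₀, by simpa [ha₀] using ha⟩)
  have hff : f₀ * f₁ = 1 := by
    have : V 0 0 * (f₀ * f₁ - 1) = 0 := by linear_combination f₁ * ha - hd
    linear_combination (mul_eq_zero.mp this).resolve_left ha₀
  obtain ⟨D, hD, hDD⟩ := exists_mem_unitaryGroup_kronecker_self_eq_phaseDiag hf₀ hff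
  exact Or.inl ⟨V * D, mul_mem hV hD, by rw [mul_kronecker_mul, hDD]; rfl⟩
end
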